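/- arXiv:2201.00284 — 5 statements merged into one kernel-verified Lean document; each statement's English description precedes it below -/
import Mathlib

section
/- Let m ≥ 1, let E₁, …, E_m be real normed vector spaces, let Z₁, …, Z_m be random vectors defined on a common probability space (possibly dependent) with Z_i taking values in E_i, let Z̃_i ∈ E_i be deterministic, and let σ > 0 and C, c > 0. Suppose that for each i and every continuous linear form f : E_i → ℝ of operator norm at most 1 and every t > 0, P(|f(Z_i) − f(Z̃_i)| ≥ t) ≤ C·exp(−c(t/σ)²). Then there exist constants C', c' > 0 depending only on C and c (and not on m) such that the random vector (Z₁, …, Z_m), taking values in the product space E = E₁ × ⋯ × E_m equipped with the norm ‖(z₁, …, z_m)‖ = max_{1≤i≤m} ‖z_i‖, satisfies: for every continuous linear form u : E → ℝ of operator norm at most 1 and every t > 0, P(|u(Z₁,…,Z_m) − u(Z̃₁,…,Z̃_m)| ≥ t) ≤ C'·exp(−c'(t/σ)²). -/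
open MeasureTheory ProbabilityTheory Real

/-- Linear concentration around a deterministic equivalent. -/
def LinearConcentration {E : Type*} [NormedAddCommGroup E] [NormedSpace ℝ E]
    {Ω : Type*} [MeasurableSpace Ω] (μ : Measure Ω) (Z : Ω → E) (Zt : E)
    (σ C c : ℝ) : Prop :=
  ∀ f : E →L[ℝ] ℝ, ‖f‖ ≤ 1 →
    ∀ t : ℝ, 0 < t →
      μ {ω | t ≤ |f (Z ω) - f Zt|} ≤
        ENNReal.ofReal (C * Real.exp (-c * (t / σ) ^ 2))

/-!
Write `u z = ∑ i, aᵢ * fᵢ zᵢ` with `aᵢ = ‖u ∘ single i‖` and `‖fᵢ‖ ≤ 1`; for the sup norm,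
`∑ i, aᵢ ≤ ‖u‖ ≤ 1`. Hence `|u Z - u Z̃|` is dominated by a sub-convex combination of the
variables `|fᵢ Zᵢ - fᵢ Z̃ᵢ|`, each with a Gaussian tail. Convexity of `exp` bounds the moment
generating function of such a combination by any bound `≥ 1` common to its terms, whatever
the dependence between them, and a tail bound turns into a moment generating function bound and
back (layer cake and Chernoff) with constants depending only on `C` and `c`. As the `Zᵢ` need
not be measurable, each term is first replaced by a measurable majorant with the same tail.
-/

open Set Filter Topology
open scoped ENNReal

section Majorant

variable {Ω : Type*} [MeasurableSpace Ω]

theorem exists_measurable_majorant (μ : Measure Ω) (f : Ω → ℝ≥0∞) :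
    ∃ g : Ω → ℝ≥0∞, Measurable g ∧ f ≤ g ∧
      ∀ ⦃q r : ℝ≥0∞⦄, q < r → μ {ω | r ≤ g ω} ≤ μ {ω | q ≤ f ω} := by
  let S (p : ℚ) : Set Ω := toMeasurable μ {ω | ENNReal.ofReal p ≤ f ω}
  -- the intersection makes `T` antitone
  let T (q : ℚ) : Set Ω := ⋂ (p : ℚ) (_ : p ≤ q), S p
  have hT_anti : Antitone T := fun q q' hqq' =>
    iInter₂_mono' fun p hp => ⟨p, hp.trans hqq', subset_rfl⟩
  have hT_superset (q : ℚ) : {ω | ENNReal.ofReal q ≤ f ω} ⊆ T q :=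
    fun ω hω => mem_iInter₂.mpr fun p hp => subset_toMeasurable _ _ <|
      (ENNReal.ofReal_le_ofReal (by exact_mod_cast hp)).trans hω
  have hT_measure (q : ℚ) : μ (T q) ≤ μ {ω | ENNReal.ofReal q ≤ f ω} :=
    (measure_mono (iInter₂_subset (s := fun p (_ : p ≤ q) => S p) q le_rfl)).trans
      (measure_toMeasurable _).le
  refine ⟨fun ω => ⨆ q, (T q).indicator (fun _ => ENNReal.ofReal q) ω,
    .iSup fun q => measurable_const.indicator <|
      .iInter fun p => .iInter fun _ => measurableSet_toMeasurable _ _, fun ω => ?_, ?_⟩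
  · by_contra! h
    obtain ⟨q, -, hgq, hqf⟩ := ENNReal.lt_iff_exists_rat_btwn.mp h
    exact hgq.not_ge (le_iSup_of_le q
      (indicator_of_mem (hT_superset q hqf.le) fun _ => ENNReal.ofReal q).ge)
  · intro q r hqr
    obtain ⟨p, -, hqp, hpr⟩ := ENNReal.lt_iff_exists_rat_btwn.mp hqr
    refine (measure_mono fun ω (hω : r ≤ _) => ?_).trans
      ((hT_measure p).trans (measure_mono fun ω (hω : _ ≤ f ω) => hqp.le.trans hω))
    obtain ⟨p', hp'⟩ := lt_iSup_iff.mp (hpr.trans_le hω)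
    by_cases hmem : ω ∈ T p'
    · rw [indicator_of_mem hmem] at hp'
      exact hT_anti (by exact_mod_cast (ENNReal.ofReal_lt_ofReal_iff'.mp hp').1.le) hmem
    · simp [indicator_of_notMem hmem] at hp'

end Majorant

theorem exp_mul_sub_mul_sq_eq {b : ℝ} (hb : 0 < b) (L x : ℝ) :
    exp (L * x - b * x ^ 2) = exp (L ^ 2 / (4 * b)) * exp (-b * (x - L / (2 * b)) ^ 2) := by
  rw [← exp_add]
  congr 1
  field_simp
  ring

theorem integrable_exp_mul_sub_mul_sq {b : ℝ} (hb : 0 < b) (L : ℝ) :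
    Integrable fun x => exp (L * x - b * x ^ 2) := by
  simp_rw [exp_mul_sub_mul_sq_eq hb]
  exact ((integrable_exp_neg_mul_sq hb).comp_sub_right _).const_mul _

theorem integral_exp_mul_sub_mul_sq {b : ℝ} (hb : 0 < b) (L : ℝ) :
    ∫ x, exp (L * x - b * x ^ 2) = exp (L ^ 2 / (4 * b)) * √(π / b) := by
  simp_rw [exp_mul_sub_mul_sq_eq hb]
  rw [integral_const_mul, integral_sub_right_eq_self (fun x => exp (-b * x ^ 2)),
    integral_gaussian]

theorem le_exp_sq_div_four (x : ℝ) : x ≤ exp (x ^ 2 / 4) := by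
  nlinarith [add_one_le_exp (x ^ 2 / 4), sq_nonneg (x - 2)]

section SubGaussianTail

variable {Ω : Type*} [MeasurableSpace Ω] {μ : Measure Ω} {σ C c : ℝ}

def SubGaussianTail (μ : Measure Ω) (Y : Ω → ℝ) (σ C c : ℝ) : Prop :=
  ∀ t : ℝ, 0 < t → μ {ω | t ≤ Y ω} ≤ ENNReal.ofReal (C * exp (-c * (t / σ) ^ 2))

theorem SubGaussianTail.mono_ae {Y Y' : Ω → ℝ} (hY' : SubGaussianTail μ Y' σ C c)
    (hYY' : Y ≤ᵐ[μ] Y') : SubGaussianTail μ Y σ C c := fun t ht =>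
  (measure_mono_ae (hYY'.mono fun _ hω (htω : t ≤ _) => htω.trans hω)).trans (hY' t ht)

theorem tendsto_ofReal_mul_exp_neg_mul_sq (hc : 0 < c) (hσ : 0 < σ) :
    Tendsto (fun t => ENNReal.ofReal (C * exp (-c * (t / σ) ^ 2))) atTop (𝓝 0) := by
  have h : Tendsto (fun t => c * (t / σ) ^ 2) atTop atTop :=
    ((tendsto_pow_atTop two_ne_zero).comp (tendsto_id.atTop_div_const hσ)).const_mul_atTop hc
  rw [← ENNReal.ofReal_zero, ← mul_zero C]
  refine ENNReal.tendsto_ofReal ((tendsto_exp_atBot.comp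
    (tendsto_neg_atTop_atBot.comp h)).const_mul C |>.congr fun t => ?_)
  simp [neg_mul]

theorem SubGaussianTail.exists_measurable_ae_le {Y : Ω → ℝ} (hY : SubGaussianTail μ Y σ C c)
    (hc : 0 < c) (hσ : 0 < σ) :
    ∃ h : Ω → ℝ, Measurable h ∧ 0 ≤ h ∧ Y ≤ᵐ[μ] h ∧ SubGaussianTail μ h σ C c := by
  obtain ⟨g, hg, hYg, hg_tail⟩ := exists_measurable_majorant μ fun ω => ENNReal.ofReal (Y ω)
  have hg_tail' (r : ℝ) (hr : 0 < r) :
      μ {ω | ENNReal.ofReal r ≤ g ω} ≤ ENNReal.ofReal (C * exp (-c * (r / σ) ^ 2)) := by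
    have hφ : ContinuousAt (fun q : ℝ => ENNReal.ofReal (C * exp (-c * (q / σ) ^ 2))) r :=
      (ENNReal.continuous_ofReal.comp (by fun_prop)).continuousAt
    refine ge_of_tendsto (hφ.tendsto.mono_left nhdsWithin_le_nhds :
      Tendsto _ (𝓝[<] r) _) ?_
    filter_upwards [Ioo_mem_nhdsLT hr] with q ⟨hq, hqr⟩
    calc μ {ω | ENNReal.ofReal r ≤ g ω}
        ≤ μ {ω | ENNReal.ofReal q ≤ ENNReal.ofReal (Y ω)} :=
          hg_tail ((ENNReal.ofReal_lt_ofReal_iff hr).mpr hqr)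
      _ ≤ μ {ω | q ≤ Y ω} := measure_mono fun ω hω =>
          (ENNReal.ofReal_le_ofReal_iff'.mp hω).resolve_right hq.not_ge
      _ ≤ _ := hY q hq
  have hg_ne_top : ∀ᵐ ω ∂μ, g ω ≠ ⊤ := by
    refine ae_iff.mpr (le_zero_iff.mp (ge_of_tendsto (tendsto_ofReal_mul_exp_neg_mul_sq hc hσ)
      ((eventually_gt_atTop 0).mono fun r hr => (measure_mono ?_).trans (hg_tail' r hr))))
    intro ω hω
    simp_all
  refine ⟨fun ω => (g ω).toReal, hg.ennreal_toReal, fun ω => ENNReal.toReal_nonneg,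
    hg_ne_top.mono fun ω hω => (ENNReal.ofReal_le_iff_le_toReal hω).mp (hYg ω), fun r hr => ?_⟩
  exact (measure_mono fun ω (hω : r ≤ _) =>
    (ENNReal.ofReal_le_ofReal hω).trans ENNReal.ofReal_toReal_le).trans (hg_tail' r hr)

theorem lintegral_ofReal_exp_mul_eq [IsProbabilityMeasure μ] {h : Ω → ℝ} (hh : Measurable h)
    (h0 : 0 ≤ h) {L : ℝ} (hL : 0 ≤ L) :
    ∫⁻ ω, ENNReal.ofReal (exp (L * h ω)) ∂μ =
      1 + ∫⁻ s in Ioi 0, μ {ω | s ≤ h ω} * ENNReal.ofReal (L * exp (L * s)) := by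
  have hcont : Continuous fun s => L * exp (L * s) := by fun_prop
  have hFTC (x : ℝ) : ∫ s in (0 : ℝ)..x, L * exp (L * s) = exp (L * x) - 1 := by
    rw [intervalIntegral.integral_eq_sub_of_hasDerivAt (f := fun s => exp (L * s))
      (fun s _ => ?_) (hcont.intervalIntegrable 0 x)]
    · simp
    · simpa [mul_comm] using ((hasDerivAt_id s).const_mul L).exp
  have hsplit (ω : Ω) :
      ENNReal.ofReal (exp (L * h ω)) = ENNReal.ofReal (exp (L * h ω) - 1) + 1 := by
    rw [← ENNReal.ofReal_one, ← ENNReal.ofReal_add _ zero_le_one, sub_add_cancel]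
    exact sub_nonneg.mpr (one_le_exp (mul_nonneg hL (h0 ω)))
  rw [← lintegral_comp_eq_lintegral_meas_le_mul μ (Eventually.of_forall h0)
    hh.aemeasurable (fun t _ => hcont.intervalIntegrable 0 t)
    (Eventually.of_forall fun t => by positivity)]
  simp_rw [hFTC, hsplit]
  rw [lintegral_add_right _ measurable_const, lintegral_one, measure_univ, add_comm]

theorem SubGaussianTail.lintegral_exp_le [IsProbabilityMeasure μ] {h : Ω → ℝ}
    (htail : SubGaussianTail μ h σ C c) (hh : Measurable h) (h0 : 0 ≤ h) (hC : 0 ≤ C)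
    (hc : 0 < c) (hσ : 0 < σ) {L : ℝ} (hL : 0 ≤ L) :
    ∫⁻ ω, ENNReal.ofReal (exp (L * h ω)) ∂μ ≤
      ENNReal.ofReal ((1 + C * √(π / c)) * exp ((L * σ) ^ 2 / (4 * (c / (c + 1))))) := by
  set b := c / σ ^ 2 with hb_def
  have hb : 0 < b := by positivity
  have hlayer : ∫⁻ s in Ioi 0, μ {ω | s ≤ h ω} * ENNReal.ofReal (L * exp (L * s)) ≤
      ENNReal.ofReal (C * L * (exp (L ^ 2 / (4 * b)) * √(π / b))) := by
    calc _ ≤ ∫⁻ s in Ioi 0, ENNReal.ofReal (C * L * exp (L * s - b * s ^ 2)) := by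
          refine setLIntegral_mono' measurableSet_Ioi fun s hs => ?_
          have : C * exp (-c * (s / σ) ^ 2) * (L * exp (L * s)) =
              C * L * exp (L * s - b * s ^ 2) := by
            rw [show L * s - b * s ^ 2 = -c * (s / σ) ^ 2 + L * s by ring, exp_add]
            ring
          rw [← this, ENNReal.ofReal_mul (by positivity : 0 ≤ C * exp (-c * (s / σ) ^ 2))]
          exact mul_le_mul_left (htail s hs) _
      _ ≤ ∫⁻ s, ENNReal.ofReal (C * L * exp (L * s - b * s ^ 2)) :=
          setLIntegral_le_lintegral _ _
      _ = _ := by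
          rw [← ofReal_integral_eq_lintegral_ofReal
            ((integrable_exp_mul_sub_mul_sq hb L).const_mul _)
            (Eventually.of_forall fun s => by positivity),
            integral_const_mul, integral_exp_mul_sub_mul_sq hb]
  rw [lintegral_ofReal_exp_mul_eq hh h0 hL]
  refine (add_le_add_right hlayer 1).trans ?_
  rw [← ENNReal.ofReal_one, ← ENNReal.ofReal_add zero_le_one (by positivity)]
  refine ENNReal.ofReal_le_ofReal ?_
  have hsqrt : √(π / b) = σ * √(π / c) := by
    rw [show π / b = σ ^ 2 * (π / c) by rw [hb_def]; field_simp, sqrt_mul (sq_nonneg σ),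
      sqrt_sq hσ.le]
  have hexp : exp ((L * σ) ^ 2 / (4 * (c / (c + 1)))) =
      exp ((L * σ) ^ 2 / 4) * exp (L ^ 2 / (4 * b)) := by
    rw [← exp_add, hb_def]
    congr 1
    field_simp
  have h1 : 1 ≤ exp ((L * σ) ^ 2 / (4 * (c / (c + 1)))) := one_le_exp (by positivity)
  have h2 : L * σ * exp (L ^ 2 / (4 * b)) ≤ exp ((L * σ) ^ 2 / (4 * (c / (c + 1)))) := by
    rw [hexp]
    exact mul_le_mul_of_nonneg_right (le_exp_sq_div_four _) (exp_pos _).le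
  rw [hsqrt]
  nlinarith [mul_le_mul_of_nonneg_left h2 (by positivity : 0 ≤ C * √(π / c))]

theorem lintegral_exp_sum_mul_le [IsProbabilityMeasure μ] {ι : Type*} (s : Finset ι)
    {Y : ι → Ω → ℝ} (hY : ∀ i ∈ s, Measurable (Y i)) {a : ι → ℝ} (ha : ∀ i ∈ s, 0 ≤ a i)
    (ha_sum : ∑ i ∈ s, a i ≤ 1) {M : ℝ≥0∞} (hM : 1 ≤ M)
    (hYM : ∀ i ∈ s, ∫⁻ ω, ENNReal.ofReal (exp (Y i ω)) ∂μ ≤ M) :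
    ∫⁻ ω, ENNReal.ofReal (exp (∑ i ∈ s, a i * Y i ω)) ∂μ ≤ M := by
  set w := 1 - ∑ i ∈ s, a i with hw_def
  have hw : 0 ≤ w := sub_nonneg.mpr ha_sum
  -- Jensen for `exp`, with the remaining weight `w` placed at `0`
  have hjensen (ω : Ω) :
      exp (∑ i ∈ s, a i * Y i ω) ≤ w * exp 0 + ∑ i ∈ s, a i * exp (Y i ω) := by
    simpa using convexOn_exp.map_add_sum_le ha (by ring) (fun i _ => mem_univ (Y i ω)) hw
      (mem_univ 0)
  calc ∫⁻ ω, ENNReal.ofReal (exp (∑ i ∈ s, a i * Y i ω)) ∂μ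
      ≤ ∫⁻ ω, (ENNReal.ofReal w +
          ∑ i ∈ s, ENNReal.ofReal (a i) * ENNReal.ofReal (exp (Y i ω))) ∂μ := by
        refine lintegral_mono fun ω => (ENNReal.ofReal_le_ofReal (hjensen ω)).trans_eq ?_
        rw [exp_zero, mul_one, ENNReal.ofReal_add hw
          (Finset.sum_nonneg fun i hi => mul_nonneg (ha i hi) (exp_pos _).le),
          ENNReal.ofReal_sum_of_nonneg fun i hi => mul_nonneg (ha i hi) (exp_pos _).le]
        exact congrArg _ (Finset.sum_congr rfl fun i hi => ENNReal.ofReal_mul (ha i hi))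
    _ = ENNReal.ofReal w * 1 +
          ∑ i ∈ s, ENNReal.ofReal (a i) * ∫⁻ ω, ENNReal.ofReal (exp (Y i ω)) ∂μ := by
        rw [lintegral_add_left measurable_const, lintegral_const, measure_univ,
          lintegral_finsetSum s fun i hi => (hY i hi).exp.ennreal_ofReal.const_mul _]
        exact congrArg _ (Finset.sum_congr rfl fun i hi =>
          lintegral_const_mul _ (hY i hi).exp.ennreal_ofReal)
    _ ≤ ENNReal.ofReal w * M + ∑ i ∈ s, ENNReal.ofReal (a i) * M := by
        gcongr with i hi
        exact hYM i hi
    _ = M := by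
        rw [← Finset.sum_mul, ← add_mul, ← ENNReal.ofReal_sum_of_nonneg ha,
          ← ENNReal.ofReal_add hw (Finset.sum_nonneg ha), hw_def, sub_add_cancel,
          ENNReal.ofReal_one, one_mul]

theorem subGaussianTail_of_lintegral_exp_le {H : Ω → ℝ} (hH : Measurable H) (hc : 0 < c)
    (hσ : 0 < σ) (hmgf : ∀ L, 0 < L → ∫⁻ ω, ENNReal.ofReal (exp (L * H ω)) ∂μ ≤
      ENNReal.ofReal (C * exp ((L * σ) ^ 2 / (4 * c)))) :
    SubGaussianTail μ H σ C c := by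
  intro t ht
  -- the minimiser of `(L * σ) ^ 2 / (4 * c) - L * t`
  set L := 2 * c * t / σ ^ 2 with hL_def
  have hL : 0 < L := by positivity
  calc μ {ω | t ≤ H ω}
      ≤ μ {ω | ENNReal.ofReal (exp (L * t)) ≤ ENNReal.ofReal (exp (L * H ω))} :=
        measure_mono fun ω (hω : t ≤ H ω) =>
          ENNReal.ofReal_le_ofReal (exp_le_exp.mpr (mul_le_mul_of_nonneg_left hω hL.le))
    _ ≤ (∫⁻ ω, ENNReal.ofReal (exp (L * H ω)) ∂μ) / ENNReal.ofReal (exp (L * t)) :=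
        meas_ge_le_lintegral_div (hH.const_mul L).exp.ennreal_ofReal.aemeasurable
          (by positivity) ENNReal.ofReal_ne_top
    _ ≤ ENNReal.ofReal (C * exp ((L * σ) ^ 2 / (4 * c))) / ENNReal.ofReal (exp (L * t)) := by
        gcongr
        exact hmgf L hL
    _ = ENNReal.ofReal (C * exp (-c * (t / σ) ^ 2)) := by
        rw [← ENNReal.ofReal_div_of_pos (exp_pos _), mul_div_assoc, ← exp_sub, hL_def]
        congr 3
        field_simp
        ring

theorem SubGaussianTail.sum_mul [IsProbabilityMeasure μ] {ι : Type*} (s : Finset ι)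
    {Y : ι → Ω → ℝ} {a : ι → ℝ} (hY : ∀ i ∈ s, SubGaussianTail μ (Y i) σ C c)
    (ha : ∀ i ∈ s, 0 ≤ a i) (ha_sum : ∑ i ∈ s, a i ≤ 1) (hC : 0 ≤ C) (hc : 0 < c) (hσ : 0 < σ) :
    SubGaussianTail μ (fun ω => ∑ i ∈ s, a i * Y i ω) σ (1 + C * √(π / c)) (c / (c + 1)) := by
  choose! h hh_meas hh_nonneg hYh hh_tail using
    fun i hi => (hY i hi).exists_measurable_ae_le hc hσ
  have hH : Measurable fun ω => ∑ i ∈ s, a i * h i ω :=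
    Finset.measurable_sum s fun i hi => (hh_meas i hi).const_mul _
  refine (subGaussianTail_of_lintegral_exp_le hH (by positivity) hσ fun L hL => ?_).mono_ae ?_
  · simp_rw [Finset.mul_sum, mul_left_comm L]
    refine lintegral_exp_sum_mul_le s (fun i hi => (hh_meas i hi).const_mul L) ha ha_sum
      (ENNReal.one_le_ofReal.mpr (one_le_mul_of_one_le_of_one_le
        (le_add_of_nonneg_right (by positivity)) (one_le_exp (by positivity))))
      fun i hi => (hh_tail i hi).lintegral_exp_le (hh_meas i hi) (hh_nonneg i hi) hC hc hσ hL.le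
  · filter_upwards [(eventually_all_finset s).mpr hYh] with ω hω
    exact Finset.sum_le_sum fun i hi => mul_le_mul_of_nonneg_left (hω i hi) (ha i hi)

end SubGaussianTail

section DualOfProduct

variable {F : Type*} [NormedAddCommGroup F] [NormedSpace ℝ F]

theorem norm_inv_norm_smul_le_one (x : F) :
    ‖‖x‖⁻¹ • x‖ ≤ 1 := by
  rw [norm_smul, norm_inv, norm_norm]
  exact inv_mul_le_one_of_le₀ le_rfl (norm_nonneg x)

theorem norm_smul_inv_norm_smul (x : F) :
    ‖x‖ • ‖x‖⁻¹ • x = x := by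
  rcases eq_or_ne x 0 with rfl | hx
  · simp
  · exact smul_inv_smul₀ (norm_ne_zero_iff.mpr hx) x

theorem ContinuousLinearMap.exists_norm_le_one_sub_lt_apply (f : F →L[ℝ] ℝ) {ε : ℝ}
    (hε : 0 < ε) : ∃ x, ‖x‖ ≤ 1 ∧ ‖f‖ - ε < f x := by
  obtain ⟨y, hy, hfy⟩ := f.exists_lt_apply_of_lt_opNorm (sub_lt_self ‖f‖ hε)
  rcases le_or_gt 0 (f y) with hpos | hneg
  · exact ⟨y, hy.le, by rwa [Real.norm_of_nonneg hpos] at hfy⟩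
  · refine ⟨-y, (norm_neg y).trans_lt hy |>.le, ?_⟩
    rwa [map_neg, ← Real.norm_of_nonpos hneg.le]

variable {ι : Type*} [Fintype ι] [DecidableEq ι] {E : ι → Type*}
  [∀ i, NormedAddCommGroup (E i)] [∀ i, NormedSpace ℝ (E i)]

theorem ContinuousLinearMap.sum_norm_comp_single_le (u : (∀ i, E i) →L[ℝ] ℝ) :
    ∑ i, ‖u.comp (.single ℝ E i)‖ ≤ ‖u‖ := by
  refine le_of_forall_pos_lt_add fun ε hε => ?_
  set δ := ε / (Fintype.card ι + 1)
  have hδ : 0 < δ := by positivity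
  choose x hx_norm hx using fun i => (u.comp (.single ℝ E i)).exists_norm_le_one_sub_lt_apply hδ
  have hux : u x ≤ ‖u‖ := by
    simpa using (le_abs_self _).trans
      (u.le_opNorm_of_le ((pi_norm_le_iff_of_nonneg zero_le_one).mpr hx_norm))
  calc ∑ i, ‖u.comp (.single ℝ E i)‖
      ≤ ∑ i, (u.comp (.single ℝ E i) (x i) + δ) := Finset.sum_le_sum fun i _ => by
        linarith [hx i]
    _ = u x + Fintype.card ι * δ := by
        rw [Finset.sum_add_distrib, u.sum_comp_single, Finset.sum_const, Finset.card_univ,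
          nsmul_eq_mul]
    _ < ‖u‖ + ε := by
        have : Fintype.card ι * δ < ε := by
          rw [mul_div_assoc', div_lt_iff₀ (by positivity)]
          linarith
        linarith

theorem ContinuousLinearMap.abs_apply_sub_le_sum (u : (∀ i, E i) →L[ℝ] ℝ) (x y : ∀ i, E i) :
    |u x - u y| ≤ ∑ i, ‖u.comp (.single ℝ E i)‖ *
      |(‖u.comp (.single ℝ E i)‖⁻¹ • u.comp (.single ℝ E i)) (x i) -
        (‖u.comp (.single ℝ E i)‖⁻¹ • u.comp (.single ℝ E i)) (y i)| := by
  have hsplit (z : ∀ i, E i) : u z = ∑ i, ‖u.comp (.single ℝ E i)‖ *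
      (‖u.comp (.single ℝ E i)‖⁻¹ • u.comp (.single ℝ E i)) (z i) := by
    conv_lhs => rw [← u.sum_comp_single (v := z)]
    exact Finset.sum_congr rfl fun i _ => by
      rw [← smul_eq_mul, ← smul_apply, norm_smul_inv_norm_smul]
  rw [hsplit x, hsplit y, ← Finset.sum_sub_distrib]
  refine (Finset.abs_sum_le_sum_abs _ _).trans_eq (Finset.sum_congr rfl fun i _ => ?_)
  rw [← mul_sub, abs_mul, abs_norm]

end DualOfProduct

/-- The linear observable diameter is unchanged under concatenation (for the `ℓ^∞`
product norm, which is the norm of the Pi type), even for dependent vectors, with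
constants depending only on `C, c` and not on `m`. -/
theorem stmt_4 (C c : ℝ) (hC : 0 < C) (hc : 0 < c) :
    ∃ C' c' : ℝ, 0 < C' ∧ 0 < c' ∧
      ∀ (m : ℕ), 1 ≤ m →
      ∀ (E : Fin m → Type) (_ : ∀ i, NormedAddCommGroup (E i))
        (_ : ∀ i, NormedSpace ℝ (E i))
        (Ω : Type) (_ : MeasureSpace Ω), IsProbabilityMeasure (ℙ : Measure Ω) →
        ∀ (Z : ∀ i, Ω → E i) (Zt : ∀ i, E i) (σ : ℝ), 0 < σ →
          (∀ i, LinearConcentration ℙ (Z i) (Zt i) σ C c) →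
          LinearConcentration (E := ∀ i, E i) ℙ (fun ω i => Z i ω) Zt σ C' c' := by
  refine ⟨1 + C * √(π / c), c / (c + 1), by positivity, by positivity, ?_⟩
  intro m _ E _ _ Ω _ _ Z Zt σ hσ hZ u hu
  have hsum := SubGaussianTail.sum_mul Finset.univ
    (fun i _ => hZ i _ (norm_inv_norm_smul_le_one (u.comp (.single ℝ E i))))
    (fun i _ => norm_nonneg _) (u.sum_norm_comp_single_le.trans hu) hC.le hc hσ
  exact hsum.mono_ae (Eventually.of_forall fun ω => u.abs_apply_sub_le_sum _ Zt)
end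

section
/- Let E be a separable real Banach space, let (Z_m)_{m∈ℕ} be random vectors in E defined on a common probability space (possibly dependent), let (Z̃_m)_{m∈ℕ} ⊂ E be deterministic, let (σ_m)_{m∈ℕ} be positive reals and C, c > 0, and suppose: for every m, Z_m is linearly concentrated around Z̃_m with observable diameter σ_m and constants C, c; almost surely Σ_{m∈ℕ} ‖Z_m‖ < ∞; the series Σ_{m∈ℕ} Z̃_m converges in E; and Σ_{m∈ℕ} σ_m < ∞. Then there exist constants C', c' > 0 depending only on C and c such that Σ_{m∈ℕ} Z_m is linearly concentrated around Σ_{m∈ℕ} Z̃_m with observable diameter Σ_{m∈ℕ} σ_m and constants C', c'. -/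
open MeasureTheory ProbabilityTheory Real Filter Topology

open scoped ENNReal

/-!
Fix `f` with `‖f‖ ≤ 1`, put `X m = f (Z m) - f (Zt m)` and `s = ∑ σ m`. The `Z m` need not be
measurable, so each `|X m| / σ m` is first dominated by a measurable `Y m` with the same Gaussian
tail, built from measurable hulls of its level sets. Layer-cake integration of that tail gives
`𝔼[exp (c/2 · Y m ^ 2) - 1] ≤ C`. As `x ↦ exp (c/2 · x ^ 2) - 1` is convex and vanishes at `0`,
Jensen's inequality with the sub-probability weights `σ m / s` bounds
`𝔼[exp (c/2 · (∑_{m<N} σ m Y m / s) ^ 2) - 1]` by `C` uniformly in `N`. By Fatou the `liminf`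
obeys the same bound, and it dominates `exp (c/2 · (f (∑ Z m) - f S) ^ 2 / s ^ 2) - 1` almost
surely; Markov's inequality then gives the tail bound with `C' = 1 + C` and `c' = c / 2`.
-/

theorem integral_Ioi_mul_exp_neg_mul_sq {b : ℝ} (hb : 0 < b) :
    ∫ r in Set.Ioi (0 : ℝ), r * exp (-b * r ^ 2) = (2 * b)⁻¹ := by
  have h := integral_mul_cexp_neg_mul_sq (b := (b : ℂ)) (by simpa using hb)
  rw [← Complex.ofReal_inj]
  push_cast
  rw [← h, ← integral_complex_ofReal]
  push_cast
  rfl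

theorem hasDerivAt_exp_mul_sq (b t : ℝ) :
    HasDerivAt (fun u => exp (b * u ^ 2)) (2 * b * t * exp (b * t ^ 2)) t := by
  convert ((hasDerivAt_pow 2 t).const_mul b).exp using 1
  ring

theorem convexOn_exp_mul_sq {b : ℝ} (hb : 0 ≤ b) :
    ConvexOn ℝ Set.univ fun x => exp (b * x ^ 2) := by
  have hderiv2 (x : ℝ) : HasDerivAt (fun y => 2 * b * y * exp (b * y ^ 2))
      ((2 * b + (2 * b * x) ^ 2) * exp (b * x ^ 2)) x := by
    refine (((hasDerivAt_id' x).const_mul (2 * b)).mul (hasDerivAt_exp_mul_sq b x)).congr_deriv ?_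
    ring
  refine convexOn_of_hasDerivWithinAt2_nonneg convex_univ (by fun_prop)
    (fun x _ => (hasDerivAt_exp_mul_sq b x).hasDerivWithinAt)
    (fun x _ => (hderiv2 x).hasDerivWithinAt) fun x _ => by positivity

theorem lintegral_exp_mul_sq_sub_one_le {Ω : Type*} [MeasurableSpace Ω] {μ : Measure Ω}
    {Y : Ω → ℝ} (hY : AEMeasurable Y μ) (hY0 : 0 ≤ᵐ[μ] Y) {C b c : ℝ} (hC : 0 ≤ C)
    (hb : 0 ≤ b) (hbc : b < c)
    (htail : ∀ t, 0 < t → μ {ω | t ≤ Y ω} ≤ ENNReal.ofReal (C * exp (-c * t ^ 2))) :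
    ∫⁻ ω, ENNReal.ofReal (exp (b * Y ω ^ 2) - 1) ∂μ ≤ ENNReal.ofReal (C * b / (c - b)) := by
  set g : ℝ → ℝ := fun t => 2 * b * t * exp (b * t ^ 2)
  have hg : Continuous g := by fun_prop
  have hg_integral (x : ℝ) : ∫ t in 0..x, g t = exp (b * x ^ 2) - 1 := by
    rw [intervalIntegral.integral_eq_sub_of_hasDerivAt (fun t _ => hasDerivAt_exp_mul_sq b t)
      (hg.intervalIntegrable 0 x)]
    simp
  have hg_nonneg : ∀ᵐ t ∂volume.restrict (Set.Ioi 0), 0 ≤ g t :=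
    (ae_restrict_iff' measurableSet_Ioi).2 (ae_of_all _ fun t (ht : 0 < t) => by positivity)
  set h : ℝ → ℝ := fun t => C * (2 * b) * (t * exp (-(c - b) * t ^ 2))
  have hh_int : IntegrableOn h (Set.Ioi 0) :=
    ((integrable_mul_exp_neg_mul_sq (sub_pos.2 hbc)).const_mul _).integrableOn
  have hh_nonneg : 0 ≤ᵐ[volume.restrict (Set.Ioi 0)] h :=
    (ae_restrict_iff' measurableSet_Ioi).2 (ae_of_all _ fun t (ht : 0 < t) => by positivity)
  calc ∫⁻ ω, ENNReal.ofReal (exp (b * Y ω ^ 2) - 1) ∂μ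
      = ∫⁻ t in Set.Ioi 0, μ {ω | t ≤ Y ω} * ENNReal.ofReal (g t) := by
        simp_rw [← hg_integral]
        exact lintegral_comp_eq_lintegral_meas_le_mul μ hY0 hY
          (fun t _ => hg.intervalIntegrable 0 t) hg_nonneg
    _ ≤ ∫⁻ t in Set.Ioi 0, ENNReal.ofReal (h t) := by
        refine setLIntegral_mono' measurableSet_Ioi fun t (ht : 0 < t) => ?_
        calc μ {ω | t ≤ Y ω} * ENNReal.ofReal (g t)
            ≤ ENNReal.ofReal (C * exp (-c * t ^ 2)) * ENNReal.ofReal (g t) := by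
              gcongr; exact htail t ht
          _ = ENNReal.ofReal (h t) := by
              rw [← ENNReal.ofReal_mul' (by positivity)]
              congr 1
              simp only [g, h]
              rw [show -(c - b) * t ^ 2 = -c * t ^ 2 + b * t ^ 2 by ring, exp_add]
              ring
    _ = ENNReal.ofReal (C * b / (c - b)) := by
        rw [← ofReal_integral_eq_lintegral_ofReal hh_int hh_nonneg, integral_const_mul,
          integral_Ioi_mul_exp_neg_mul_sq (sub_pos.2 hbc)]
        congr 1
        field_simp

theorem ConvexOn.map_sum_le_of_sum_le_one {ι : Type*} {ψ : ℝ → ℝ} (hψ : ConvexOn ℝ Set.univ ψ)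
    (hψ0 : ψ 0 = 0) {t : Finset ι} {w p : ι → ℝ} (hw : ∀ i ∈ t, 0 ≤ w i)
    (hw1 : ∑ i ∈ t, w i ≤ 1) : ψ (∑ i ∈ t, w i * p i) ≤ ∑ i ∈ t, w i * ψ (p i) := by
  simpa [hψ0] using hψ.map_add_sum_le (v := 1 - ∑ i ∈ t, w i) (q := 0) hw (by ring)
    (fun i _ => Set.mem_univ (p i)) (sub_nonneg.2 hw1) (Set.mem_univ 0)

theorem lintegral_ofReal_map_sum_le {ι Ω : Type*} [MeasurableSpace Ω] {μ : Measure Ω}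
    {ψ : ℝ → ℝ} (hψ : ConvexOn ℝ Set.univ ψ) (hψ0 : ψ 0 = 0) (hψm : Measurable ψ)
    {t : Finset ι} {w : ι → ℝ} (hw : ∀ i ∈ t, 0 ≤ w i) (hw1 : ∑ i ∈ t, w i ≤ 1)
    {X : ι → Ω → ℝ} (hX : ∀ i ∈ t, AEMeasurable (X i) μ) {K : ℝ}
    (hK : ∀ i ∈ t, ∫⁻ ω, ENNReal.ofReal (ψ (X i ω)) ∂μ ≤ ENNReal.ofReal K) :
    ∫⁻ ω, ENNReal.ofReal (ψ (∑ i ∈ t, w i * X i ω)) ∂μ ≤ ENNReal.ofReal K := by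
  have hpoint (ω : Ω) : ENNReal.ofReal (ψ (∑ i ∈ t, w i * X i ω)) ≤
      ∑ i ∈ t, ENNReal.ofReal (w i) * ENNReal.ofReal (ψ (X i ω)) :=
    calc ENNReal.ofReal (ψ (∑ i ∈ t, w i * X i ω))
        ≤ ENNReal.ofReal (∑ i ∈ t, w i * ψ (X i ω)) :=
          ENNReal.ofReal_le_ofReal (hψ.map_sum_le_of_sum_le_one hψ0 hw hw1)
      _ ≤ ∑ i ∈ t, ENNReal.ofReal (w i * ψ (X i ω)) :=
          Finset.le_sum_of_subadditive _ ENNReal.ofReal_zero.le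
            (fun _ _ => ENNReal.ofReal_add_le) _ _
      _ = ∑ i ∈ t, ENNReal.ofReal (w i) * ENNReal.ofReal (ψ (X i ω)) :=
          Finset.sum_congr rfl fun i hi => ENNReal.ofReal_mul (hw i hi)
  calc ∫⁻ ω, ENNReal.ofReal (ψ (∑ i ∈ t, w i * X i ω)) ∂μ
      ≤ ∑ i ∈ t, ENNReal.ofReal (w i) * ∫⁻ ω, ENNReal.ofReal (ψ (X i ω)) ∂μ := by
        refine (lintegral_mono hpoint).trans_eq ?_
        have hmeas (i) (hi : i ∈ t) : AEMeasurable (fun ω => ENNReal.ofReal (ψ (X i ω))) μ :=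
          (hψm.comp_aemeasurable (hX i hi)).ennreal_ofReal
        rw [lintegral_finsetSum' _ fun i hi => (hmeas i hi).const_mul _]
        exact Finset.sum_congr rfl fun i hi =>
          lintegral_const_mul' _ _ ENNReal.ofReal_ne_top
    _ ≤ ∑ i ∈ t, ENNReal.ofReal (w i) * ENNReal.ofReal K := by gcongr with i hi; exact hK i hi
    _ ≤ ENNReal.ofReal K := by
        rw [← Finset.sum_mul, ← ENNReal.ofReal_sum_of_nonneg hw]
        exact mul_le_of_le_one_left' (ENNReal.ofReal_le_one.2 hw1)

theorem IsClosed.mem_of_forall_rat_mem_Ioo {K : Set ℝ} (hK : IsClosed K) {a t : ℝ} (hat : a < t)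
    (h : ∀ q : ℚ, a < q → (q : ℝ) < t → (q : ℝ) ∈ K) : t ∈ K := by
  have hsub : Set.Ioo a t ∩ Set.range ((↑) : ℚ → ℝ) ⊆ K := by
    rintro _ ⟨⟨haq, hqt⟩, q, rfl⟩
    exact h q haq hqt
  have ht : t ∈ closure (Set.Ioo a t) := by
    rw [closure_Ioo hat.ne]
    exact Set.right_mem_Icc.2 hat.le
  have := closure_mono (Rat.denseRange_cast.open_subset_closure_inter isOpen_Ioo) ht
  rw [closure_closure] at this
  exact closure_minimal hsub hK this

namespace MeasureTheory

variable {Ω : Type*} [MeasurableSpace Ω] (μ : Measure Ω) (g : Ω → ℝ)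

/-- A measurable hull of `{q ≤ g}`, made antitone in `q` so that the tails of `tailEnvelope`
are controlled by those of `g`. -/
noncomputable def tailSet (q : ℚ) : Set Ω :=
  ⋂ (r : ℚ) (_ : r ≤ q), toMeasurable μ {ω | (r : ℝ) ≤ g ω}

noncomputable def tailEnvelope (ω : Ω) : ℝ≥0∞ :=
  ⨆ q : ℚ, (tailSet μ g q).indicator (fun _ => ENNReal.ofReal q) ω

variable {μ g}

theorem measurableSet_tailSet (q : ℚ) : MeasurableSet (tailSet μ g q) :=
  .iInter fun _ => .iInter fun _ => measurableSet_toMeasurable _ _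

theorem tailSet_antitone : Antitone (tailSet μ g) := fun _ _ hqr _ hω =>
  Set.mem_iInter₂.2 fun r hr => Set.mem_iInter₂.1 hω r (hr.trans hqr)

theorem setOf_le_subset_tailSet (q : ℚ) : {ω | (q : ℝ) ≤ g ω} ⊆ tailSet μ g q :=
  fun _ hω => Set.mem_iInter₂.2 fun _ hr =>
    subset_toMeasurable _ _ (Set.mem_ofPred.2 ((Rat.cast_le.2 hr).trans (Set.mem_ofPred.1 hω)))

theorem measure_tailSet_le (q : ℚ) : μ (tailSet μ g q) ≤ μ {ω | (q : ℝ) ≤ g ω} := by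
  rw [← measure_toMeasurable {ω | (q : ℝ) ≤ g ω}]
  exact measure_mono (Set.iInter₂_subset (κ := fun r : ℚ => r ≤ q) q le_rfl)

theorem measurable_tailEnvelope : Measurable (tailEnvelope μ g) :=
  .iSup fun q => measurable_const.indicator (measurableSet_tailSet q)

theorem ofReal_le_tailEnvelope (ω : Ω) : ENNReal.ofReal (g ω) ≤ tailEnvelope μ g ω := by
  refine (isClosed_le ENNReal.continuous_ofReal continuous_const :
    IsClosed {y | ENNReal.ofReal y ≤ tailEnvelope μ g ω}).mem_of_forall_rat_mem_Ioo
    (sub_one_lt (g ω)) fun q _ hq => ?_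
  change ENNReal.ofReal q ≤ ⨆ r : ℚ, (tailSet μ g r).indicator _ ω
  refine le_iSup_of_le q (le_of_eq ?_)
  rw [Set.indicator_of_mem (setOf_le_subset_tailSet q hq.le)]

theorem setOf_le_tailEnvelope_subset {q : ℚ} {t : ℝ} (hq : 0 ≤ (q : ℝ)) (hqt : (q : ℝ) < t) :
    {ω | ENNReal.ofReal t ≤ tailEnvelope μ g ω} ⊆ tailSet μ g q := by
  intro ω hω
  obtain ⟨r, hr⟩ := lt_iSup_iff.1 (((ENNReal.ofReal_lt_ofReal_iff_of_nonneg hq).2 hqt).trans_le hω)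
  by_cases hωr : ω ∈ tailSet μ g r
  · rw [Set.indicator_of_mem hωr] at hr
    exact tailSet_antitone (Rat.cast_le.1 ((ENNReal.ofReal_lt_ofReal_iff_of_nonneg hq).1 hr).le) hωr
  · simp [Set.indicator_of_notMem hωr] at hr

variable {B : ℝ → ℝ}

theorem measure_le_tailEnvelope_le
    (htail : ∀ t, 0 < t → μ {ω | t ≤ g ω} ≤ ENNReal.ofReal (B t)) (hB : Continuous B) {t : ℝ}
    (ht : 0 < t) :
    μ {ω | ENNReal.ofReal t ≤ tailEnvelope μ g ω} ≤ ENNReal.ofReal (B t) :=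
  (isClosed_le continuous_const (ENNReal.continuous_ofReal.comp hB)).mem_of_forall_rat_mem_Ioo ht
    fun q hq hqt => (measure_mono (setOf_le_tailEnvelope_subset hq.le hqt)).trans
      ((measure_tailSet_le q).trans (htail q hq))

theorem ae_tailEnvelope_lt_top
    (htail : ∀ t, 0 < t → μ {ω | t ≤ g ω} ≤ ENNReal.ofReal (B t)) (hB : Tendsto B atTop (𝓝 0)) :
    ∀ᵐ ω ∂μ, tailEnvelope μ g ω < ∞ := by
  have hle (n : ℕ) (hn : 1 ≤ n) : μ {ω | tailEnvelope μ g ω = ∞} ≤ ENNReal.ofReal (B n) := by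
    have hn' : (0 : ℝ) < n := by exact_mod_cast hn
    calc μ {ω | tailEnvelope μ g ω = ∞}
        ≤ μ (tailSet μ g n) := measure_mono fun ω (hω : _ = ∞) =>
          setOf_le_tailEnvelope_subset (t := n + 1) (by simp) (by simp) (by simp [hω])
      _ ≤ ENNReal.ofReal (B n) := (measure_tailSet_le _).trans (by simpa using htail n hn')
  have hlim : Tendsto (fun n : ℕ => ENNReal.ofReal (B n)) atTop (𝓝 0) := by
    simpa [Function.comp_def] using (ENNReal.tendsto_ofReal hB).comp tendsto_natCast_atTop_atTop
  simpa [ae_iff, lt_top_iff_ne_top] using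
    ge_of_tendsto hlim (eventually_atTop.2 ⟨1, hle⟩)

theorem exists_measurable_ae_le_of_tail_le
    (htail : ∀ t, 0 < t → μ {ω | t ≤ g ω} ≤ ENNReal.ofReal (B t))
    (hB : Continuous B) (hB0 : Tendsto B atTop (𝓝 0)) :
    ∃ Y : Ω → ℝ, Measurable Y ∧ (∀ ω, 0 ≤ Y ω) ∧ g ≤ᵐ[μ] Y ∧
      ∀ t, 0 < t → μ {ω | t ≤ Y ω} ≤ ENNReal.ofReal (B t) := by
  refine ⟨fun ω => (tailEnvelope μ g ω).toReal, measurable_tailEnvelope.ennreal_toReal,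
    fun ω => ENNReal.toReal_nonneg, ?_, fun t ht => ?_⟩
  · filter_upwards [ae_tailEnvelope_lt_top htail hB0] with ω hω
    exact (ENNReal.ofReal_le_iff_le_toReal hω.ne).1 (ofReal_le_tailEnvelope ω)
  · exact (measure_mono fun ω hω => ENNReal.ofReal_le_of_le_toReal hω).trans
      (measure_le_tailEnvelope_le htail hB ht)

end MeasureTheory

theorem ofReal_exp_mul_sq_sub_one_le_liminf {x y σ : ℕ → ℝ} {ℓ s b : ℝ} (hb : 0 ≤ b) (hs : 0 < s)
    (hx : Tendsto (fun N => ∑ m ∈ Finset.range N, x m) atTop (𝓝 ℓ))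
    (hxy : ∀ m, |x m| ≤ σ m * y m) :
    ENNReal.ofReal (exp (b * (ℓ / s) ^ 2) - 1) ≤
      liminf (fun N => ENNReal.ofReal
        (exp (b * (∑ m ∈ Finset.range N, σ m / s * y m) ^ 2) - 1)) atTop := by
  have hcont : Continuous fun u => ENNReal.ofReal (exp (b * (u / s) ^ 2) - 1) :=
    ENNReal.continuous_ofReal.comp (by fun_prop)
  rw [← ((hcont.tendsto ℓ).comp hx).liminf_eq]
  refine liminf_le_liminf (Eventually.of_forall fun N => ?_)
  have hsum : |∑ m ∈ Finset.range N, x m| ≤ ∑ m ∈ Finset.range N, σ m * y m :=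
    (Finset.abs_sum_le_sum_abs _ _).trans (Finset.sum_le_sum fun m _ => hxy m)
  have hsq : ((∑ m ∈ Finset.range N, x m) / s) ^ 2 ≤ (∑ m ∈ Finset.range N, σ m / s * y m) ^ 2 := by
    rw [sq_le_sq, abs_div, abs_of_pos hs]
    refine le_trans ?_ (le_abs_self _)
    simp_rw [div_mul_eq_mul_div, ← Finset.sum_div]
    gcongr
  simp only [Function.comp_apply]
  gcongr

theorem measure_le_mul_exp_neg_of_lintegral_le {Ω : Type*} [MeasurableSpace Ω] {μ : Measure Ω}
    [IsProbabilityMeasure μ] {Ψ : Ω → ℝ≥0∞} (hΨ : AEMeasurable Ψ μ) {K : ℝ} (hK : 0 ≤ K)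
    (hΨK : ∫⁻ ω, Ψ ω ∂μ ≤ ENNReal.ofReal K) {A : Set Ω} {u : ℝ}
    (hA : ∀ᵐ ω ∂μ, ω ∈ A → ENNReal.ofReal (exp u - 1) ≤ Ψ ω) :
    μ A ≤ ENNReal.ofReal ((1 + K) * exp (-u)) := by
  have hu : 0 < exp u := exp_pos u
  calc μ A ≤ μ {ω | ENNReal.ofReal (exp u) ≤ Ψ ω + 1} := by
        refine measure_mono_ae (hA.mono fun ω h hω => le_trans ?_ (add_le_add_left (h hω) 1))
        simpa using ENNReal.ofReal_add_le (p := exp u - 1) (q := 1)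
    _ ≤ (∫⁻ ω, (Ψ ω + 1) ∂μ) / ENNReal.ofReal (exp u) :=
        meas_ge_le_lintegral_div (hΨ.add_const 1) (ENNReal.ofReal_pos.2 hu).ne'
          ENNReal.ofReal_ne_top
    _ ≤ ENNReal.ofReal (1 + K) / ENNReal.ofReal (exp u) := by
        rw [lintegral_add_right' _ aemeasurable_const, lintegral_const, measure_univ, mul_one,
          add_comm 1 K, ENNReal.ofReal_add hK zero_le_one, ENNReal.ofReal_one]
        gcongr
    _ = ENNReal.ofReal ((1 + K) * exp (-u)) := by
        rw [← ENNReal.ofReal_div_of_pos hu, div_eq_mul_inv, ← exp_neg]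

theorem exists_measurable_ae_le_lintegral_exp_sq_le {Ω : Type*} [MeasurableSpace Ω]
    {μ : Measure Ω} {g : Ω → ℝ} {C c : ℝ} (hC : 0 ≤ C) (hc : 0 < c)
    (htail : ∀ t, 0 < t → μ {ω | t ≤ g ω} ≤ ENNReal.ofReal (C * exp (-c * t ^ 2))) :
    ∃ Y : Ω → ℝ, Measurable Y ∧ g ≤ᵐ[μ] Y ∧
      ∫⁻ ω, ENNReal.ofReal (exp (c / 2 * Y ω ^ 2) - 1) ∂μ ≤ ENNReal.ofReal C := by
  have hB0 : Tendsto (fun t : ℝ => C * exp (-c * t ^ 2)) atTop (𝓝 0) := by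
    simpa using (tendsto_exp_atBot.comp ((tendsto_pow_atTop two_ne_zero).const_mul_atTop_of_neg
      (neg_lt_zero.2 hc))).const_mul C
  obtain ⟨Y, hYm, hY0, hgY, hYtail⟩ :=
    exists_measurable_ae_le_of_tail_le htail (by fun_prop) hB0
  refine ⟨Y, hYm, hgY, ?_⟩
  have := lintegral_exp_mul_sq_sub_one_le hYm.aemeasurable (ae_of_all _ hY0) hC
    (half_pos hc).le (half_lt_self hc) hYtail
  rwa [sub_half, mul_div_cancel_right₀ _ (half_pos hc).ne'] at this

theorem measure_le_abs_of_tendsto_sum_le {Ω : Type*} [MeasurableSpace Ω] {μ : Measure Ω}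
    [IsProbabilityMeasure μ] {X : ℕ → Ω → ℝ} {L : Ω → ℝ} {σ : ℕ → ℝ} {C c : ℝ} (hC : 0 ≤ C)
    (hc : 0 < c) (hσ : ∀ m, 0 < σ m) (hσs : Summable σ)
    (htail : ∀ m t, 0 < t → μ {ω | t ≤ |X m ω| / σ m} ≤ ENNReal.ofReal (C * exp (-c * t ^ 2)))
    (hL : ∀ᵐ ω ∂μ, Tendsto (fun N => ∑ m ∈ Finset.range N, X m ω) atTop (𝓝 (L ω)))
    {t : ℝ} (ht : 0 < t) :
    μ {ω | t ≤ |L ω|} ≤ ENNReal.ofReal ((1 + C) * exp (-(c / 2) * (t / ∑' m, σ m) ^ 2)) := by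
  set s := ∑' m, σ m
  have hs : 0 < s := hσs.tsum_pos (fun m => (hσ m).le) 0 (hσ 0)
  choose Y hYm hXY hmoment using fun m =>
    exists_measurable_ae_le_lintegral_exp_sq_le hC hc (htail m)
  set Φ : ℕ → Ω → ℝ≥0∞ := fun N ω =>
    ENNReal.ofReal (exp (c / 2 * (∑ m ∈ Finset.range N, σ m / s * Y m ω) ^ 2) - 1)
  have hconvex : ConvexOn ℝ Set.univ fun x => exp (c / 2 * x ^ 2) - 1 := by
    simpa [sub_eq_add_neg, Pi.add_def] using
      (convexOn_exp_mul_sq (half_pos hc).le).add_const (-1)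
  have hΦ (N : ℕ) : ∫⁻ ω, Φ N ω ∂μ ≤ ENNReal.ofReal C :=
    lintegral_ofReal_map_sum_le hconvex (by simp) (by fun_prop)
      (fun m _ => div_nonneg (hσ m).le hs.le)
      (by rw [← Finset.sum_div, div_le_one hs]; exact hσs.sum_le_tsum _ fun m _ => (hσ m).le)
      (fun m _ => (hYm m).aemeasurable) fun m _ => hmoment m
  have hΦm (N : ℕ) : Measurable (Φ N) := by fun_prop
  rw [neg_mul]
  refine measure_le_mul_exp_neg_of_lintegral_le (Measurable.liminf hΦm).aemeasurable hC
    ((lintegral_liminf_le hΦm).trans (liminf_le_of_frequently_le' (.of_forall hΦ))) ?_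
  filter_upwards [hL, ae_all_iff.2 hXY] with ω hLω hXYω (htL : t ≤ |L ω|)
  have hxy (m : ℕ) : |X m ω| ≤ σ m * Y m ω := (div_le_iff₀' (hσ m)).1 (hXYω m)
  refine le_trans ?_ (ofReal_exp_mul_sq_sub_one_le_liminf (half_pos hc).le hs hLω hxy)
  have : t ^ 2 ≤ L ω ^ 2 := by simpa using pow_le_pow_left₀ ht.le htL 2
  rw [div_pow, div_pow]
  gcongr

theorem LinearConcentration.measure_le_abs_div_le {E : Type*} [NormedAddCommGroup E]
    [NormedSpace ℝ E] {Ω : Type*} [MeasurableSpace Ω] {μ : Measure Ω} {Z : Ω → E} {Zt : E}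
    {σ C c : ℝ} (h : LinearConcentration μ Z Zt σ C c) (hσ : 0 < σ) {f : E →L[ℝ] ℝ}
    (hf : ‖f‖ ≤ 1) {t : ℝ} (ht : 0 < t) :
    μ {ω | t ≤ |f (Z ω) - f Zt| / σ} ≤ ENNReal.ofReal (C * exp (-c * t ^ 2)) := by
  simpa only [le_div_iff₀ hσ, mul_div_cancel_right₀ _ hσ.ne'] using h f hf (t * σ) (by positivity)

/-- Concentration of series of linearly concentrated vectors: if `Σ‖Z_m‖ < ∞` almost
surely, `Σ Z̃_m` converges, and `Σ σ_m < ∞`, then `Σ Z_m` is linearly concentrated around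
`Σ Z̃_m` with observable diameter `Σ σ_m` and constants depending only on `C, c`. -/
theorem stmt_8 (C c : ℝ) (hC : 0 < C) (hc : 0 < c) :
    ∃ C' c' : ℝ, 0 < C' ∧ 0 < c' ∧
      ∀ (E : Type) (_ : NormedAddCommGroup E) (_ : NormedSpace ℝ E),
        CompleteSpace E → SecondCountableTopology E →
      ∀ (Ω : Type) (_ : MeasureSpace Ω), IsProbabilityMeasure (ℙ : Measure Ω) →
      ∀ (Z : ℕ → Ω → E) (Zt : ℕ → E) (σ : ℕ → ℝ), (∀ m, 0 < σ m) →
        (∀ m, LinearConcentration ℙ (Z m) (Zt m) (σ m) C c) →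
        (∀ᵐ ω ∂(ℙ : Measure Ω), Summable (fun m => ‖Z m ω‖)) →
        Summable σ →
        ∀ S : E, Tendsto (fun N => ∑ m ∈ Finset.range N, Zt m) atTop (𝓝 S) →
          LinearConcentration ℙ (fun ω => ∑' m, Z m ω) S (∑' m, σ m) C' c' := by
  refine ⟨1 + C, c / 2, by linarith, half_pos hc, ?_⟩
  intro E _ _ _ _ Ω _ _ Z Zt σ hσ hconc hZ hσs S hS f hf t ht
  have hL : ∀ᵐ ω, Tendsto (fun N => ∑ m ∈ Finset.range N, (f (Z m ω) - f (Zt m))) atTop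
      (𝓝 (f (∑' m, Z m ω) - f S)) := by
    filter_upwards [hZ] with ω hω
    simpa only [Finset.sum_sub_distrib, Function.comp_def, map_sum] using
      ((f.continuous.tendsto _).comp (hω.of_norm.hasSum.tendsto_sum_nat)).sub
        ((f.continuous.tendsto _).comp hS)
  exact measure_le_abs_of_tendsto_sum_le hC.le hc hσ hσs
    (fun m _ ht => (hconc m).measure_le_abs_div_le (hσ m) hf ht) hL ht
end

section
/- Let E be a separable real Banach space, ε ∈ (0,1), σ > 0 and C, c > 0. Let A be a random bounded linear operator on E and b a random vector in E, defined on a common probability space, such that almost surely the operator norm of A is at most 1 − ε, b is Bochner integrable, and for every integer k ≥ 0 the vector A^k b is Bochner integrable and linearly concentrated around E[A^k b] with observable diameter σ(1−ε)^k and constants C, c. Then almost surely the equation Y = A·Y + b has a unique solution, given by Y = Σ_{k≥0} A^k b = (Id_E − A)^{−1} b, and there exist constants C', c' > 0 depending only on C and c such that Y is linearly concentrated around Σ_{k≥0} E[A^k b] with observable diameter σ/ε and constants C', c'. -/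
/-!
Almost surely `‖A‖ ≤ 1 - ε < 1`, so the Neumann series `Y = Σ A^k b` converges and is the unique
fixed point of the contraction `y ↦ A y + b`. For a linear form `f` of norm at most one and
`Ỹ = Σ E[A^k b]`, `f Y - f Ỹ` is the a.s. limit of the partial sums of the variables
`X_k = f (A^k b) - f (E[A^k b])`. A tail `C exp (-c (t / s)²)` forces `‖X‖_{L^P} ≤ K s √P` with
`K` depending only on `C, c`, so by Minkowski and Fatou `‖f Y - f Ỹ‖_{L^P} ≤ K (σ / ε) √P` for
every `P ≥ 1`. Markov's inequality at `P ≈ (t ε / (2 K σ))²` turns this back into a Gaussian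
tail with `C' = 2`, `c' = log 2 / (8 K²)`.
-/

open MeasureTheory ProbabilityTheory Real Filter Topology
open scoped ENNReal

section NeumannSeries

variable {E : Type*} [NormedAddCommGroup E] [NormedSpace ℝ E]

lemma norm_pow_apply_le (T : E →L[ℝ] E) {r : ℝ} (hT : ‖T‖ ≤ r) (k : ℕ) (x : E) :
    ‖(T ^ k) x‖ ≤ r ^ k * ‖x‖ := by
  induction k with
  | zero => simp
  | succ k ih =>
    rw [pow_succ', mul_apply_eq_comp, pow_succ', mul_assoc]
    exact (T.le_opNorm _).trans (mul_le_mul hT ih (norm_nonneg _) ((norm_nonneg T).trans hT))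

lemma summable_pow_apply [CompleteSpace E] {T : E →L[ℝ] E} {r : ℝ} (hT : ‖T‖ ≤ r)
    (hr : r < 1) (x : E) : Summable fun k ↦ (T ^ k) x :=
  .of_norm_bounded ((summable_geometric_of_lt_one ((norm_nonneg T).trans hT) hr).mul_right ‖x‖)
    (norm_pow_apply_le T hT · x)

lemma tsum_pow_apply_eq_apply_add [CompleteSpace E] {T : E →L[ℝ] E} {r : ℝ} (hT : ‖T‖ ≤ r)
    (hr : r < 1) (x : E) : ∑' k, (T ^ k) x = T (∑' k, (T ^ k) x) + x := by
  have hs := summable_pow_apply hT hr x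
  simp only [T.map_tsum hs, ← mul_apply_eq_comp, ← pow_succ']
  rw [hs.tsum_eq_zero_add, pow_zero, one_apply_eq_self, add_comm]

lemma eq_of_eq_apply_add {T : E →L[ℝ] E} {r : ℝ} (hT : ‖T‖ ≤ r) (hr : r < 1) {x y z : E}
    (hy : y = T y + x) (hz : z = T z + x) : y = z := by
  have hfix : y - z = T (y - z) := by
    rw [map_sub]; nth_rewrite 1 [hy, hz]; abel
  have hle : ‖y - z‖ ≤ r * ‖y - z‖ := by
    nth_rewrite 1 [hfix]
    exact (T.le_opNorm _).trans (mul_le_mul_of_nonneg_right hT (norm_nonneg _))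
  rw [← sub_eq_zero, ← norm_le_zero_iff]
  nlinarith [norm_nonneg (y - z)]

lemma summable_integral_pow_apply [CompleteSpace E] {Ω : Type*} [MeasurableSpace Ω]
    {μ : Measure Ω} {A : Ω → E →L[ℝ] E} {b : Ω → E} {r : ℝ} (hr₀ : 0 ≤ r) (hr : r < 1)
    (hA : ∀ᵐ ω ∂μ, ‖A ω‖ ≤ r) (hb : Integrable b μ) :
    Summable fun k ↦ ∫ ω, (A ω ^ k) (b ω) ∂μ := by
  refine .of_norm_bounded
    ((summable_geometric_of_lt_one hr₀ hr).mul_right (∫ ω, ‖b ω‖ ∂μ)) fun k ↦ ?_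
  rw [← integral_const_mul]
  refine norm_integral_le_of_norm_le (hb.norm.const_mul _) ?_
  filter_upwards [hA] with ω hω
  exact norm_pow_apply_le (A ω) hω k (b ω)

end NeumannSeries

lemma le_exp_sq_div_two (u : ℝ) : u ≤ exp (u ^ 2 / 2) := by
  nlinarith [add_one_le_exp (u ^ 2 / 2), sq_nonneg (u - 1)]

lemma pow_mul_exp_neg_mul_sq_le {c y : ℝ} (hc : 0 < c) (hy : 0 ≤ y) (P : ℕ) :
    y ^ P * exp (-(c * y ^ 2)) ≤ √(P / c) ^ P * exp (-(c / 2 * y ^ 2)) := by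
  rcases P.eq_zero_or_pos with rfl | hP
  · simp only [pow_zero, one_mul, exp_le_exp]
    nlinarith [sq_nonneg y]
  set Q := √(P / c)
  have hQ : 0 < Q := sqrt_pos.mpr (by positivity)
  have hu : (y / Q) ^ P ≤ exp (c / 2 * y ^ 2) := by
    calc (y / Q) ^ P ≤ exp ((y / Q) ^ 2 / 2) ^ P :=
          pow_le_pow_left₀ (by positivity) (le_exp_sq_div_two _) P
      _ = exp (c / 2 * y ^ 2) := by
          rw [← exp_nat_mul, div_pow, sq_sqrt (by positivity)]
          field_simp
  calc y ^ P * exp (-(c * y ^ 2)) = Q ^ P * ((y / Q) ^ P * exp (-(c * y ^ 2))) := by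
        rw [div_pow]; field_simp
    _ ≤ Q ^ P * (exp (c / 2 * y ^ 2) * exp (-(c * y ^ 2))) := by gcongr
    _ = Q ^ P * exp (-(c / 2 * y ^ 2)) := by rw [← exp_add]; ring_nf

lemma hasSum_exp_neg_mul_succ {a : ℝ} (ha : 0 < a) :
    HasSum (fun j : ℕ ↦ exp (-(a * (j + 1)))) (exp a - 1)⁻¹ := by
  have hρ : exp (-a) < 1 := exp_lt_one_iff.mpr (by linarith)
  have hterm : (fun j : ℕ ↦ exp (-(a * (j + 1)))) = fun j ↦ exp (-a) * exp (-a) ^ j := by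
    funext j
    rw [← exp_nat_mul, ← exp_add]
    ring_nf
  have hsum : (exp a - 1)⁻¹ = exp (-a) * (1 - exp (-a))⁻¹ := by
    have : 1 < exp a := one_lt_exp_iff.mpr ha
    rw [exp_neg]
    field_simp
  rw [hterm, hsum]
  exact (hasSum_geometric_of_lt_one (exp_pos _).le hρ).mul_left _

lemma ofReal_pow_le_add_tsum_indicator {s r : ℝ} (hs : 0 < s) (hr : 0 ≤ r) (P : ℕ) :
    ENNReal.ofReal (r ^ P) ≤ ENNReal.ofReal (s ^ P) +
      ∑' j : ℕ,
        {x | (j + 1) * s ≤ x}.indicator (fun _ ↦ ENNReal.ofReal (((j + 2) * s) ^ P)) r := by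
  rcases lt_or_ge r s with hrs | hsr
  · exact le_add_right (by gcongr)
  set j := ⌊r / s - 1⌋₊
  have hj₀ : 0 ≤ r / s - 1 := by rw [sub_nonneg, le_div_iff₀ hs]; linarith
  have hj_lower : ((j : ℝ) + 1) * s ≤ r := by
    have := Nat.floor_le hj₀; rw [← le_div_iff₀ hs]; linarith
  have hj_upper : r ≤ ((j : ℝ) + 2) * s := by
    have := Nat.lt_floor_add_one (r / s - 1); rw [← div_le_iff₀ hs]; linarith
  refine le_add_left (le_trans ?_ (ENNReal.le_tsum j))
  rw [Set.indicator_of_mem (by exact hj_lower)]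
  gcongr

lemma pow_mul_tail_le {s C c : ℝ} (hs : 0 ≤ s) (hC : 0 ≤ C) (hc : 0 < c) (P j : ℕ) :
    ((j + 2) * s) ^ P * (C * exp (-c * (j + 1) ^ 2)) ≤
      s ^ P * C * (2 * √(P / c)) ^ P * exp (-(c / 2 * (j + 1))) := by
  have hj : (1 : ℝ) ≤ j + 1 := by simp
  have hshift : ((j + 2) * s) ^ P ≤ (2 * s * (j + 1)) ^ P :=
    pow_le_pow_left₀ (by positivity) (by nlinarith) P
  calc ((j + 2) * s) ^ P * (C * exp (-c * (j + 1) ^ 2))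
      ≤ (2 * s * (j + 1)) ^ P * (C * exp (-(c * (j + 1) ^ 2))) := by rw [neg_mul]; gcongr
    _ = 2 ^ P * s ^ P * C * ((j + 1) ^ P * exp (-(c * (j + 1) ^ 2))) := by
        rw [mul_pow, mul_pow]; ring
    _ ≤ 2 ^ P * s ^ P * C * (√(P / c) ^ P * exp (-(c / 2 * (j + 1) ^ 2))) :=
        mul_le_mul_of_nonneg_left (pow_mul_exp_neg_mul_sq_le hc (by positivity) P)
          (by positivity)
    _ ≤ 2 ^ P * s ^ P * C * (√(P / c) ^ P * exp (-(c / 2 * (j + 1)))) := by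
        gcongr
        nlinarith
    _ = s ^ P * C * (2 * √(P / c)) ^ P * exp (-(c / 2 * (j + 1))) := by ring

lemma one_add_mul_pow_le {K q : ℝ} (hK : 0 ≤ K) (hq : 0 ≤ q) {P : ℕ} (hP : P ≠ 0) :
    1 + K * q ^ P ≤ ((1 + K) * (q + 1)) ^ P := by
  have h1 : (1 : ℝ) ≤ (q + 1) ^ P := one_le_pow₀ (by linarith)
  have h2 : q ^ P ≤ (q + 1) ^ P := by gcongr; linarith
  have h3 : 1 + K ≤ (1 + K) ^ P := le_self_pow₀ (by linarith) hP
  calc 1 + K * q ^ P ≤ (1 + K) * (q + 1) ^ P := by nlinarith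
    _ ≤ (1 + K) ^ P * (q + 1) ^ P := by gcongr
    _ = ((1 + K) * (q + 1)) ^ P := (mul_pow _ _ _).symm

lemma pow_sqrt_div_le_exp {u : ℝ} (hu : 0 < u) {P : ℕ} (hP_ge : u ^ 2 / 4 ≤ P)
    (hP_le : (P : ℝ) ≤ u ^ 2 / 2) : (√P / u) ^ P ≤ exp (-(log 2 / 8) * u ^ 2) := by
  have hx : √P / u ≤ exp (-(log 2 / 2)) := by
    rw [← pow_le_pow_iff_left₀ (by positivity) (exp_pos _).le two_ne_zero, div_pow,
      sq_sqrt (Nat.cast_nonneg P), ← exp_nat_mul, div_le_iff₀ (by positivity)]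
    have : exp (((2 : ℕ) : ℝ) * -(log 2 / 2)) = 2⁻¹ := by
      rw [show ((2 : ℕ) : ℝ) * -(log 2 / 2) = -log 2 by push_cast; ring, exp_neg,
        exp_log two_pos]
    rw [this]
    linarith
  calc (√P / u) ^ P ≤ exp (-(log 2 / 2)) ^ P := by gcongr
    _ = exp (P * -(log 2 / 2)) := (exp_nat_mul _ _).symm
    _ ≤ exp (-(log 2 / 8) * u ^ 2) := by
        rw [exp_le_exp]
        nlinarith [log_pos one_lt_two]

/-- The constant `K` of `‖X‖_{L^P} ≤ K s √P` for a tail `C exp (-c (t / s)²)`: the first factor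
sums the tail over the layers `(j + 1) s ≤ |X| < (j + 2) s`, the second bounds `2 √(P / c) + 1`
by a multiple of `√P`. -/
noncomputable def subGaussianMomentConst (C c : ℝ) : ℝ :=
  (1 + C / (exp (c / 2) - 1)) * (2 / √c + 1)

lemma subGaussianMomentConst_pos {C c : ℝ} (hC : 0 ≤ C) (hc : 0 < c) :
    0 < subGaussianMomentConst C c := by
  have : 1 < exp (c / 2) := one_lt_exp_iff.mpr (by linarith)
  unfold subGaussianMomentConst
  have : 0 ≤ C / (exp (c / 2) - 1) := div_nonneg hC (by linarith)
  positivity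

lemma pow_add_tail_sum_le {s C c : ℝ} (hs : 0 ≤ s) (hC : 0 ≤ C) (hc : 0 < c) {P : ℕ}
    (hP : P ≠ 0) : s ^ P + s ^ P * C * (2 * √(P / c)) ^ P * (exp (c / 2) - 1)⁻¹ ≤
      (subGaussianMomentConst C c * s * √P) ^ P := by
  have hexp : 0 < exp (c / 2) - 1 := sub_pos.mpr (one_lt_exp_iff.mpr (by positivity))
  set K := C / (exp (c / 2) - 1)
  set Q := √(P / c)
  have hQ : 2 * Q + 1 ≤ (2 / √c + 1) * √P := by
    have : (1 : ℝ) ≤ √P := one_le_sqrt.mpr (by exact_mod_cast Nat.one_le_iff_ne_zero.mpr hP)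
    have : 2 * Q = 2 / √c * √P := by
      rw [show Q = √P / √c from sqrt_div (Nat.cast_nonneg P) c]; ring
    nlinarith
  calc s ^ P + s ^ P * C * (2 * Q) ^ P * (exp (c / 2) - 1)⁻¹
        = s ^ P * (1 + K * (2 * Q) ^ P) := by simp only [K, div_eq_mul_inv]; ring
    _ ≤ s ^ P * ((1 + K) * (2 * Q + 1)) ^ P := by
        gcongr
        exact one_add_mul_pow_le (by positivity) (by positivity) hP
    _ ≤ s ^ P * ((1 + K) * ((2 / √c + 1) * √P)) ^ P := by gcongr
    _ = (subGaussianMomentConst C c * s * √P) ^ P := by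
        rw [subGaussianMomentConst, ← mul_pow]; ring

section Moments

variable {Ω : Type*} [MeasurableSpace Ω] {μ : Measure Ω}

lemma eLpNorm_natCast_pow_eq_lintegral {f : Ω → ℝ} {P : ℕ} (hP : P ≠ 0) :
    eLpNorm f P μ ^ P = ∫⁻ ω, ENNReal.ofReal (|f ω| ^ P) ∂μ := by
  have := eLpNorm_nnreal_pow_eq_lintegral (μ := μ) (f := f) (p := (P : NNReal))
    (by exact_mod_cast hP)
  simp only [NNReal.coe_natCast, ENNReal.rpow_natCast, ENNReal.coe_natCast] at this
  rw [this]
  congr 1 with ω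
  rw [Real.enorm_eq_ofReal_abs, ENNReal.ofReal_pow (abs_nonneg _)]

lemma meas_le_abs_le_of_eLpNorm_le {f : Ω → ℝ} (hf : AEStronglyMeasurable f μ) {P : ℕ}
    (hP : P ≠ 0) {M t : ℝ} (hM : 0 ≤ M) (ht : 0 < t) (h : eLpNorm f P μ ≤ ENNReal.ofReal M) :
    μ {ω | t ≤ |f ω|} ≤ ENNReal.ofReal ((M / t) ^ P) := by
  have hmarkov := meas_ge_le_mul_pow_eLpNorm_enorm μ (by exact_mod_cast hP)
    (ENNReal.natCast_ne_top P) hf (ε := ENNReal.ofReal t) (by simpa using ht) (by simp)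
  simp only [Real.enorm_eq_ofReal_abs, ENNReal.ofReal_le_ofReal_iff (abs_nonneg _),
    ENNReal.toReal_natCast, ENNReal.rpow_natCast] at hmarkov
  refine hmarkov.trans ?_
  calc (ENNReal.ofReal t)⁻¹ ^ P * eLpNorm f P μ ^ P
        ≤ (ENNReal.ofReal t)⁻¹ ^ P * ENNReal.ofReal M ^ P := by gcongr
    _ = ENNReal.ofReal ((M / t) ^ P) := by
        rw [← ENNReal.ofReal_inv_of_pos ht, ← mul_pow, ← ENNReal.ofReal_mul (by positivity),
          ENNReal.ofReal_pow (by positivity), inv_mul_eq_div]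

lemma lintegral_ofReal_pow_le_add_tsum [IsProbabilityMeasure μ] {X : Ω → ℝ}
    (hX : AEMeasurable X μ) {s : ℝ} (hs : 0 < s) (P : ℕ) :
    ∫⁻ ω, ENNReal.ofReal (|X ω| ^ P) ∂μ ≤ ENNReal.ofReal (s ^ P) +
      ∑' j : ℕ, ENNReal.ofReal (((j + 2) * s) ^ P) * μ {ω | (j + 1) * s ≤ |X ω|} := by
  have hsets (j : ℕ) : NullMeasurableSet {ω | (j + 1) * s ≤ |X ω|} μ :=
    nullMeasurableSet_le aemeasurable_const (continuous_abs.measurable.comp_aemeasurable hX)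
  calc ∫⁻ ω, ENNReal.ofReal (|X ω| ^ P) ∂μ
      ≤ ∫⁻ ω, ENNReal.ofReal (s ^ P) + ∑' j : ℕ, {ω | (j + 1) * s ≤ |X ω|}.indicator
          (fun _ ↦ ENNReal.ofReal (((j + 2) * s) ^ P)) ω ∂μ :=
        lintegral_mono fun ω ↦ ofReal_pow_le_add_tsum_indicator hs (abs_nonneg _) P
    _ = ENNReal.ofReal (s ^ P) +
          ∑' j : ℕ, ENNReal.ofReal (((j + 2) * s) ^ P) * μ {ω | (j + 1) * s ≤ |X ω|} := by
        rw [lintegral_add_left measurable_const, lintegral_tsum fun j ↦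
          (aemeasurable_const.indicator₀ (hsets j))]
        simp only [lintegral_indicator_const₀ (hsets _), lintegral_const, measure_univ, mul_one]

lemma lintegral_ofReal_pow_le_of_tail [IsProbabilityMeasure μ] {X : Ω → ℝ}
    (hX : AEMeasurable X μ) {s C c : ℝ} (hs : 0 < s) (hC : 0 ≤ C) (hc : 0 < c)
    (htail : ∀ t : ℝ, 0 < t → μ {ω | t ≤ |X ω|} ≤ ENNReal.ofReal (C * exp (-c * (t / s) ^ 2)))
    {P : ℕ} (hP : P ≠ 0) :
    ∫⁻ ω, ENNReal.ofReal (|X ω| ^ P) ∂μ ≤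
      ENNReal.ofReal ((subGaussianMomentConst C c * s * √P) ^ P) := by
  set a := s ^ P * C * (2 * √(P / c)) ^ P
  have hterm (j : ℕ) : ENNReal.ofReal (((j + 2) * s) ^ P) * μ {ω | (j + 1) * s ≤ |X ω|} ≤
      ENNReal.ofReal (a * exp (-(c / 2 * (j + 1)))) := by
    have htail_j := htail ((j + 1) * s) (by positivity)
    rw [mul_div_cancel_right₀ _ hs.ne'] at htail_j
    calc _ ≤ ENNReal.ofReal (((j + 2) * s) ^ P) *
            ENNReal.ofReal (C * exp (-c * (j + 1) ^ 2)) := by gcongr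
      _ ≤ _ := by
          rw [← ENNReal.ofReal_mul (by positivity)]
          exact ENNReal.ofReal_le_ofReal (pow_mul_tail_le hs.le hC hc P j)
  have hgeom := (hasSum_exp_neg_mul_succ (by positivity : 0 < c / 2)).mul_left a
  have htail_sum : ∑' j : ℕ, ENNReal.ofReal (a * exp (-(c / 2 * (j + 1)))) =
      ENNReal.ofReal (a * (exp (c / 2) - 1)⁻¹) := by
    rw [← hgeom.tsum_eq, ENNReal.ofReal_tsum_of_nonneg (fun j ↦ by positivity) hgeom.summable]
  calc ∫⁻ ω, ENNReal.ofReal (|X ω| ^ P) ∂μ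
      ≤ ENNReal.ofReal (s ^ P) + ENNReal.ofReal (a * (exp (c / 2) - 1)⁻¹) :=
        (lintegral_ofReal_pow_le_add_tsum hX hs P).trans
          (by gcongr; exact (ENNReal.tsum_le_tsum hterm).trans htail_sum.le)
    _ ≤ ENNReal.ofReal ((subGaussianMomentConst C c * s * √P) ^ P) := by
        have : 0 ≤ (exp (c / 2) - 1)⁻¹ :=
          inv_nonneg.mpr (sub_nonneg.mpr (one_le_exp (by positivity)))
        rw [← ENNReal.ofReal_add (by positivity) (by positivity)]
        exact ENNReal.ofReal_le_ofReal (pow_add_tail_sum_le hs.le hC hc hP)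

lemma eLpNorm_le_of_tail [IsProbabilityMeasure μ] {X : Ω → ℝ} (hX : AEMeasurable X μ)
    {s C c : ℝ} (hs : 0 < s) (hC : 0 ≤ C) (hc : 0 < c)
    (htail : ∀ t : ℝ, 0 < t → μ {ω | t ≤ |X ω|} ≤ ENNReal.ofReal (C * exp (-c * (t / s) ^ 2)))
    {P : ℕ} (hP : P ≠ 0) :
    eLpNorm X P μ ≤ ENNReal.ofReal (subGaussianMomentConst C c * s * √P) := by
  have := subGaussianMomentConst_pos hC hc
  rw [← ENNReal.pow_le_pow_left_iff hP, eLpNorm_natCast_pow_eq_lintegral hP,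
    ← ENNReal.ofReal_pow (by positivity)]
  exact lintegral_ofReal_pow_le_of_tail hX hs hC hc htail hP

lemma meas_le_abs_le_of_eLpNorm_le_sqrt [IsProbabilityMeasure μ] {f : Ω → ℝ}
    (hf : AEStronglyMeasurable f μ) {R : ℝ} (hR : 0 < R)
    (hmom : ∀ P : ℕ, P ≠ 0 → eLpNorm f P μ ≤ ENNReal.ofReal (R * √P)) {t : ℝ} (ht : 0 < t) :
    μ {ω | t ≤ |f ω|} ≤ ENNReal.ofReal (2 * exp (-(log 2 / 8) * (t / R) ^ 2)) := by
  set u := t / R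
  have hu : 0 < u := by positivity
  rcases le_or_gt u 2 with hu2 | hu2
  · refine prob_le_one.trans (ENNReal.one_le_ofReal.mpr ?_)
    have : exp (-log 2) ≤ exp (-(log 2 / 8) * u ^ 2) := by
      rw [exp_le_exp]
      nlinarith [mul_le_mul_of_nonneg_left (by nlinarith : u ^ 2 ≤ 4) (log_pos one_lt_two).le,
        log_pos one_lt_two]
    rw [exp_neg, exp_log two_pos] at this
    linarith
  set P := ⌈u ^ 2 / 4⌉₊
  have hP_ge : u ^ 2 / 4 ≤ P := Nat.le_ceil _
  have hP_le : (P : ℝ) ≤ u ^ 2 / 2 := by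
    have := Nat.ceil_lt_add_one (by positivity : 0 ≤ u ^ 2 / 4)
    nlinarith
  have hP : P ≠ 0 := by
    rw [← Nat.pos_iff_ne_zero, Nat.ceil_pos]; positivity
  refine (meas_le_abs_le_of_eLpNorm_le hf hP (by positivity) ht (hmom P hP)).trans
    (ENNReal.ofReal_le_ofReal ?_)
  rw [show R * √P / t = √P / u by simp only [u]; field_simp]
  nlinarith [pow_sqrt_div_le_exp hu hP_ge hP_le, exp_pos (-(log 2 / 8) * u ^ 2)]

lemma eLpNorm_le_tsum_of_tendsto_sum {E : Type*} [NormedAddCommGroup E] {X : ℕ → Ω → E}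
    (hX : ∀ k, AEStronglyMeasurable (X k) μ) {g : Ω → E}
    (hg : ∀ᵐ ω ∂μ, Tendsto (fun n ↦ ∑ k ∈ Finset.range n, X k ω) atTop (𝓝 (g ω)))
    {p : ℝ≥0∞} (hp : 1 ≤ p) : eLpNorm g p μ ≤ ∑' k, eLpNorm (X k) p μ := by
  refine (Lp.eLpNorm_lim_le_liminf_eLpNorm (fun n ↦ Finset.aestronglyMeasurable_fun_sum _
    fun k _ ↦ hX k) g hg).trans (liminf_le_of_frequently_le' (Frequently.of_forall fun n ↦ ?_))
  calc eLpNorm (fun ω ↦ ∑ k ∈ Finset.range n, X k ω) p μ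
      = eLpNorm (∑ k ∈ Finset.range n, X k) p μ := by rw [Finset.sum_fn]
    _ ≤ ∑ k ∈ Finset.range n, eLpNorm (X k) p μ := eLpNorm_sum_le (fun k _ ↦ hX k) hp
    _ ≤ ∑' k, eLpNorm (X k) p μ := ENNReal.sum_le_tsum _

lemma meas_le_abs_le_of_tendsto_sum_of_tail [IsProbabilityMeasure μ] {X : ℕ → Ω → ℝ}
    (hX : ∀ k, AEStronglyMeasurable (X k) μ) {g : Ω → ℝ}
    (hg : ∀ᵐ ω ∂μ, Tendsto (fun n ↦ ∑ k ∈ Finset.range n, X k ω) atTop (𝓝 (g ω)))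
    {σ : ℕ → ℝ} {S : ℝ} (hσ : ∀ k, 0 < σ k) (hS : HasSum σ S) {C c : ℝ} (hC : 0 ≤ C)
    (hc : 0 < c) (htail : ∀ k, ∀ t : ℝ, 0 < t →
      μ {ω | t ≤ |X k ω|} ≤ ENNReal.ofReal (C * exp (-c * (t / σ k) ^ 2)))
    {t : ℝ} (ht : 0 < t) :
    μ {ω | t ≤ |g ω|} ≤
      ENNReal.ofReal
        (2 * exp (-(log 2 / (8 * subGaussianMomentConst C c ^ 2)) * (t / S) ^ 2)) := by
  set K := subGaussianMomentConst C c
  have hK : 0 < K := subGaussianMomentConst_pos hC hc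
  have hS_pos : 0 < S := (hσ 0).trans_le (le_hasSum hS 0 fun k _ ↦ (hσ k).le)
  have hmom (P : ℕ) (hP : P ≠ 0) : eLpNorm g P μ ≤ ENNReal.ofReal (K * S * √P) := by
    have hsum : HasSum (fun k ↦ K * σ k * √P) (K * S * √P) := (hS.mul_left K).mul_right √P
    calc eLpNorm g P μ ≤ ∑' k, eLpNorm (X k) P μ :=
          eLpNorm_le_tsum_of_tendsto_sum hX hg (by exact_mod_cast Nat.one_le_iff_ne_zero.mpr hP)
      _ ≤ ∑' k, ENNReal.ofReal (K * σ k * √P) :=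
          ENNReal.tsum_le_tsum fun k ↦
            eLpNorm_le_of_tail (hX k).aemeasurable (hσ k) hC hc (htail k) hP
      _ = ENNReal.ofReal (K * S * √P) := by
          rw [← ENNReal.ofReal_tsum_of_nonneg (fun k ↦ by have := hσ k; positivity)
            hsum.summable, hsum.tsum_eq]
  have hg_meas : AEStronglyMeasurable g μ :=
    aestronglyMeasurable_of_tendsto_ae atTop
      (fun n ↦ Finset.aestronglyMeasurable_fun_sum _ fun k _ ↦ hX k) hg
  rw [show -(log 2 / (8 * K ^ 2)) * (t / S) ^ 2 = -(log 2 / 8) * (t / (K * S)) ^ 2 by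
    field_simp]
  exact meas_le_abs_le_of_eLpNorm_le_sqrt hg_meas (by positivity) hmom ht

end Moments

/-- Concentration of the solution of a random affine fixed point equation `Y = A·Y + b`
with `‖A‖ ≤ 1 − ε` almost surely: the solution `Y = Σ_k A^k b = (Id − A)⁻¹ b` exists,
is unique almost surely, and is linearly concentrated around `Σ_k E[A^k b]` with
observable diameter `σ/ε` and constants depending only on `C, c`. -/
theorem stmt_9 (C c : ℝ) (hC : 0 < C) (hc : 0 < c) :
    ∃ C' c' : ℝ, 0 < C' ∧ 0 < c' ∧
      ∀ (E : Type) (_ : NormedAddCommGroup E) (_ : NormedSpace ℝ E),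
        CompleteSpace E → SecondCountableTopology E →
      ∀ (Ω : Type) (_ : MeasureSpace Ω), IsProbabilityMeasure (ℙ : Measure Ω) →
      ∀ (ε σ : ℝ), 0 < ε → ε < 1 → 0 < σ →
      ∀ (A : Ω → E →L[ℝ] E) (b : Ω → E),
        (∀ᵐ ω ∂(ℙ : Measure Ω), ‖A ω‖ ≤ 1 - ε) →
        Integrable b ℙ →
        (∀ k : ℕ, Integrable (fun ω => (A ω ^ k) (b ω)) ℙ) →
        (∀ k : ℕ,
          LinearConcentration ℙ (fun ω => (A ω ^ k) (b ω))
            (∫ ω, (A ω ^ k) (b ω) ∂ℙ) (σ * (1 - ε) ^ k) C c) →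
        (∀ᵐ ω ∂(ℙ : Measure Ω), ∃! y : E, y = A ω y + b ω) ∧
        (∀ᵐ ω ∂(ℙ : Measure Ω),
          HasSum (fun k => (A ω ^ k) (b ω)) (∑' k, (A ω ^ k) (b ω)) ∧
          (∑' k, (A ω ^ k) (b ω)) = A ω (∑' k, (A ω ^ k) (b ω)) + b ω) ∧
        LinearConcentration ℙ (fun ω => ∑' k, (A ω ^ k) (b ω))
          (∑' k, ∫ ω, (A ω ^ k) (b ω) ∂ℙ) (σ / ε) C' c' := by
  have hK := subGaussianMomentConst_pos hC.le hc
  refine ⟨2, log 2 / (8 * subGaussianMomentConst C c ^ 2), two_pos,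
    div_pos (log_pos one_lt_two) (by positivity), ?_⟩
  intro E _ _ _ _ Ω _ _ ε σ hε hε1 hσ A b hA hb hInt hconc
  have hr₀ : 0 ≤ 1 - ε := by linarith
  have hr : 1 - ε < 1 := by linarith
  have hfix : ∀ᵐ ω ∂(ℙ : Measure Ω),
      ∑' k, (A ω ^ k) (b ω) = A ω (∑' k, (A ω ^ k) (b ω)) + b ω := by
    filter_upwards [hA] with ω hω using tsum_pow_apply_eq_apply_add hω hr (b ω)
  refine ⟨?_, ?_, fun f hf t ht ↦ ?_⟩
  · filter_upwards [hA, hfix] with ω hω hω_fix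
    exact ⟨_, hω_fix, fun y hy ↦ eq_of_eq_apply_add hω hr hy hω_fix⟩
  · filter_upwards [hA, hfix] with ω hω hω_fix
    exact ⟨(summable_pow_apply hω hr (b ω)).hasSum, hω_fix⟩
  have hmean := summable_integral_pow_apply hr₀ hr hA hb
  have hscale : HasSum (fun k ↦ σ * (1 - ε) ^ k) (σ / ε) := by
    simpa [div_eq_mul_inv] using (hasSum_geometric_of_lt_one hr₀ hr).mul_left σ
  refine meas_le_abs_le_of_tendsto_sum_of_tail
    (fun k ↦ (f.continuous.comp_aestronglyMeasurable (hInt k).1).sub aestronglyMeasurable_const)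
    ?_ (fun k ↦ by positivity) hscale hC.le hc (fun k ↦ hconc k f hf) ht
  filter_upwards [hA] with ω hω
  exact (((summable_pow_apply hω hr (b ω)).hasSum.mapL f).sub
    (hmean.hasSum.mapL f)).tendsto_sum_nat
end

section
/- Let E be a real normed vector space, σ > 0, C, c > 0 and K > 0. Let Z be a random vector in E that is convexly concentrated with observable diameter σ and constants C, c, and let A ⊆ E be a convex Borel set with P(Z ∈ A) ≥ K. Then there exist constants C', c' > 0 depending only on C, c and K such that for every quasi-convex 1-Lipschitz function f : E → ℝ, every median m_f of f(Z) under the conditional probability P(· | Z ∈ A), and every t > 0: P(|f(Z) − m_f| ≥ t | Z ∈ A) ≤ C'·exp(−c'(t/σ)²). -/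
open MeasureTheory ProbabilityTheory Real

/-- Convex concentration with observable diameter `σ` and constants `C, c`. -/
def ConvexConcentration {E : Type*} [NormedAddCommGroup E] [NormedSpace ℝ E]
    {Ω : Type*} [MeasurableSpace Ω] (μ : Measure Ω) (Z : Ω → E)
    (σ C c : ℝ) : Prop :=
  ∀ f : E → ℝ, LipschitzWith 1 f → (∀ s : ℝ, Convex ℝ {x | f x ≤ s}) →
    ∀ t : ℝ, 0 < t →
      μ {ω | t ≤ |f (Z ω) - ∫ ω', f (Z ω') ∂μ|} ≤
        ENNReal.ofReal (C * Real.exp (-c * (t / σ) ^ 2))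

/-- Convex concentration is preserved under conditioning on a convex Borel set of
probability at least `K`: around any conditional median of any quasi-convex
`1`-Lipschitz observation, with constants depending only on `C, c, K`. -/
theorem stmt_15 (C c K : ℝ) (hC : 0 < C) (hc : 0 < c) (hK : 0 < K) :
    ∃ C' c' : ℝ, 0 < C' ∧ 0 < c' ∧
      ∀ (E : Type) (_ : NormedAddCommGroup E) (_ : NormedSpace ℝ E)
        (_ : MeasurableSpace E), BorelSpace E →
      ∀ (Ω : Type) (_ : MeasureSpace Ω), IsProbabilityMeasure (ℙ : Measure Ω) →
      ∀ (Z : Ω → E) (σ : ℝ), 0 < σ →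
        ConvexConcentration ℙ Z σ C c →
        ∀ A : Set E, Convex ℝ A → MeasurableSet A →
          ENNReal.ofReal K ≤ ℙ (Z ⁻¹' A) →
          ∀ f : E → ℝ, LipschitzWith 1 f → (∀ s : ℝ, Convex ℝ {x | f x ≤ s}) →
            ∀ mf : ℝ,
              (1 : ENNReal) / 2 ≤ (ℙ : Measure Ω)[|Z ⁻¹' A] {ω | f (Z ω) ≤ mf} →
              (1 : ENNReal) / 2 ≤ (ℙ : Measure Ω)[|Z ⁻¹' A] {ω | mf ≤ f (Z ω)} →
              ∀ t : ℝ, 0 < t →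
                (ℙ : Measure Ω)[|Z ⁻¹' A] {ω | t ≤ |f (Z ω) - mf|} ≤
                  ENNReal.ofReal (C' * Real.exp (-c' * (t / σ) ^ 2)) := by
  refine ⟨2 * C / K + 1, c / 4, by positivity, by positivity, ?_⟩
  intro E _ _ _ _ Ω _ hprob Z σ hσ hconc A _hA _hAm hKA f hf hqc mf hm1 hm2 t ht
  haveI := hprob
  set s : Set Ω := Z ⁻¹' A with hs
  set μf := ∫ ω', f (Z ω') ∂(ℙ : Measure Ω) with hμf
  have hs0 : (ℙ : Measure Ω) s ≠ 0 :=
    (lt_of_lt_of_le (ENNReal.ofReal_pos.mpr hK) hKA).ne'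
  have hstop : (ℙ : Measure Ω) s ≠ ⊤ := (measure_lt_top _ _).ne
  have cond_apply' : ∀ T : Set Ω,
      (ℙ : Measure Ω)[|s] T = ((ℙ : Measure Ω) s)⁻¹ * (ℙ : Measure Ω).restrict s T := by
    intro T
    simp [ProbabilityTheory.cond, Measure.smul_apply, smul_eq_mul]
  have hrest : ∀ T : Set Ω, (ℙ : Measure Ω).restrict s T ≤ (ℙ : Measure Ω) T :=
    fun T => Measure.le_iff'.mp Measure.restrict_le_self T
  have hKhalf : ∀ T : Set Ω, (1 : ENNReal) / 2 ≤ (ℙ : Measure Ω)[|s] T →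
      ENNReal.ofReal (K / 2) ≤ (ℙ : Measure Ω) T := by
    intro T hT
    rw [cond_apply'] at hT
    have h1 : (ℙ : Measure Ω) s * ((1 : ENNReal) / 2)
        ≤ (ℙ : Measure Ω) s * (((ℙ : Measure Ω) s)⁻¹ * (ℙ : Measure Ω).restrict s T) :=
      mul_le_mul_right hT _
    rw [← mul_assoc, ENNReal.mul_inv_cancel hs0 hstop, one_mul] at h1
    calc ENNReal.ofReal (K / 2) = ENNReal.ofReal K * ((1 : ENNReal) / 2) := by
          rw [ENNReal.ofReal_div_of_pos two_pos]
          simp [ENNReal.div_eq_inv_mul, mul_comm]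
      _ ≤ (ℙ : Measure Ω) s * ((1 : ENNReal) / 2) := mul_le_mul_left hKA _
      _ ≤ (ℙ : Measure Ω).restrict s T := h1
      _ ≤ (ℙ : Measure Ω) T := hrest T
  set R := Real.sqrt (max (Real.log (2 * C / K)) 0 / c) with hR
  have hR0 : 0 ≤ R := Real.sqrt_nonneg _
  have hR2 : c * R ^ 2 = max (Real.log (2 * C / K)) 0 := by
    rw [hR, Real.sq_sqrt (by positivity)]
    field_simp
  have key : ∀ t0 : ℝ, 0 < t0 →
      ENNReal.ofReal (K / 2) ≤ (ℙ : Measure Ω) {ω | t0 ≤ |f (Z ω) - μf|} → t0 ≤ σ * R := by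
    intro t0 ht0 hle
    by_contra hgt
    push_neg at hgt
    have hcc := hconc f hf hqc t0 ht0
    have hKC := ENNReal.ofReal_le_ofReal_iff (by positivity :
        (0:ℝ) ≤ C * Real.exp (-c * (t0 / σ) ^ 2)) |>.mp (hle.trans hcc)
    have h1 : R < t0 / σ := by rw [lt_div_iff₀ hσ]; nlinarith
    have h2 : c * R ^ 2 < c * (t0 / σ) ^ 2 := by
      have := pow_lt_pow_left₀ h1 hR0 two_ne_zero
      nlinarith
    have h3 : Real.log (2 * C / K) < c * (t0 / σ) ^ 2 :=
      lt_of_le_of_lt (le_max_left _ _) (hR2 ▸ h2)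
    have h4 : C * Real.exp (-c * (t0 / σ) ^ 2) < K / 2 := by
      have he : Real.exp (-c * (t0 / σ) ^ 2) < Real.exp (-(Real.log (2 * C / K))) := by
        apply Real.exp_lt_exp.mpr; linarith
      have heq : Real.exp (-(Real.log (2 * C / K))) = K / (2 * C) := by
        rw [Real.exp_neg, Real.exp_log (by positivity)]
        field_simp
      rw [heq] at he
      calc C * Real.exp (-c * (t0 / σ) ^ 2) < C * (K / (2 * C)) :=
            mul_lt_mul_of_pos_left he hC
        _ = K / 2 := by field_simp
    linarith
  have hd : |mf - μf| ≤ σ * R := by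
    rcases eq_or_lt_of_le (abs_nonneg (mf - μf)) with h0 | h0
    · rw [← h0]; positivity
    · apply key _ h0
      rcases le_total mf μf with hle | hle
      · refine le_trans (hKhalf _ hm1) (measure_mono ?_)
        intro ω hω
        simp only [Set.mem_setOf_eq] at hω ⊢
        have h5 : μf - f (Z ω) ≤ |f (Z ω) - μf| := by
          rw [abs_sub_comm]; exact le_abs_self _
        rw [abs_of_nonpos (sub_nonpos.mpr hle), neg_sub]
        linarith
      · refine le_trans (hKhalf _ hm2) (measure_mono ?_)
        intro ω hω
        simp only [Set.mem_setOf_eq] at hω ⊢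
        have h5 : f (Z ω) - μf ≤ |f (Z ω) - μf| := le_abs_self _
        rw [abs_of_nonneg (sub_nonneg.mpr hle)]
        linarith
  rw [cond_apply']
  by_cases hcase : t ≤ 2 * (σ * R)
  · have hb : ((ℙ : Measure Ω) s)⁻¹ * (ℙ : Measure Ω).restrict s {ω | t ≤ |f (Z ω) - mf|}
        ≤ 1 := by
      calc ((ℙ : Measure Ω) s)⁻¹ * (ℙ : Measure Ω).restrict s {ω | t ≤ |f (Z ω) - mf|}
          ≤ ((ℙ : Measure Ω) s)⁻¹ * (ℙ : Measure Ω).restrict s Set.univ :=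
            mul_le_mul_right (measure_mono (Set.subset_univ _)) _
        _ = ((ℙ : Measure Ω) s)⁻¹ * (ℙ : Measure Ω) s := by rw [Measure.restrict_apply_univ]
        _ = 1 := ENNReal.inv_mul_cancel hs0 hstop
    refine hb.trans ?_
    rw [show (1 : ENNReal) = ENNReal.ofReal 1 from ENNReal.ofReal_one.symm]
    apply ENNReal.ofReal_le_ofReal
    have h1 : t / σ ≤ 2 * R := by rw [div_le_iff₀ hσ]; nlinarith
    have h2 : c / 4 * (t / σ) ^ 2 ≤ c * R ^ 2 := by
      nlinarith [pow_le_pow_left₀ (div_pos ht hσ).le h1 2, hc.le]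
    have h3 : Real.exp (max (Real.log (2 * C / K)) 0) ≤ 2 * C / K + 1 := by
      rcases max_cases (Real.log (2 * C / K)) 0 with ⟨he, _⟩ | ⟨he, _⟩
      · rw [he, Real.exp_log (by positivity)]; linarith
      · rw [he, Real.exp_zero]
        have : (0:ℝ) < 2 * C / K := by positivity
        linarith
    have h4 : Real.exp (c / 4 * (t / σ) ^ 2) ≤ 2 * C / K + 1 :=
      le_trans (Real.exp_le_exp.mpr (h2.trans_eq hR2)) h3
    rw [neg_mul, Real.exp_neg, ← div_eq_mul_inv, le_div_iff₀ (Real.exp_pos _), one_mul]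
    exact h4
  · push_neg at hcase
    have hhalf : 0 < t / 2 := by linarith
    have hsub : {ω | t ≤ |f (Z ω) - mf|} ⊆ {ω | t / 2 ≤ |f (Z ω) - μf|} := by
      intro ω hω
      simp only [Set.mem_setOf_eq] at hω ⊢
      have htri : |f (Z ω) - mf| ≤ |f (Z ω) - μf| + |mf - μf| := by
        calc |f (Z ω) - mf| = |(f (Z ω) - μf) + (μf - mf)| := by ring_nf
          _ ≤ |f (Z ω) - μf| + |μf - mf| := abs_add_le _ _
          _ = |f (Z ω) - μf| + |mf - μf| := by rw [abs_sub_comm μf mf]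
      linarith
    calc ((ℙ : Measure Ω) s)⁻¹ * (ℙ : Measure Ω).restrict s {ω | t ≤ |f (Z ω) - mf|}
        ≤ (ENNReal.ofReal K)⁻¹ * (ℙ : Measure Ω) {ω | t / 2 ≤ |f (Z ω) - μf|} :=
          mul_le_mul' (ENNReal.inv_le_inv.mpr hKA)
            (le_trans (hrest _) (measure_mono hsub))
      _ ≤ (ENNReal.ofReal K)⁻¹ * ENNReal.ofReal (C * Real.exp (-c * (t / 2 / σ) ^ 2)) :=
          mul_le_mul_right (hconc f hf hqc (t / 2) hhalf) _
      _ ≤ ENNReal.ofReal ((2 * C / K + 1) * Real.exp (-(c / 4) * (t / σ) ^ 2)) := by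
          rw [← ENNReal.div_eq_inv_mul, ← ENNReal.ofReal_div_of_pos hK]
          apply ENNReal.ofReal_le_ofReal
          have hexp : -c * (t / 2 / σ) ^ 2 = -(c / 4) * (t / σ) ^ 2 := by
            field_simp; ring
          rw [hexp, div_le_iff₀ hK]
          have he := Real.exp_pos (-(c / 4) * (t / σ) ^ 2)
          have hrw : (2 * C / K + 1) * Real.exp (-(c / 4) * (t / σ) ^ 2) * K
              = (2 * C + K) * Real.exp (-(c / 4) * (t / σ) ^ 2) := by
            field_simp
          rw [hrw]
          nlinarith [mul_pos (by linarith : (0:ℝ) < C + K) he]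
end

section
/- Let R be a (possibly noncommutative) ring, let m ≥ 1 be an integer, and let a₁, …, a_m ∈ R. Then Σ_{σ ∈ S_m} a_{σ(1)}·a_{σ(2)}⋯a_{σ(m)} = (−1)^m · Σ_{I ⊆ {1,…,m}} (−1)^{|I|} · (Σ_{i∈I} a_i)^m, where the first sum runs over all permutations σ of {1, …, m}, the second sum runs over all subsets I of {1, …, m} (including the empty set, with the convention that the empty sum is 0), and |I| denotes the cardinality of I. -/
open Finset

section Aux
variable {R : Type*} [Ring R]

lemma pow_sum_expand {ι : Type*} [Fintype ι] (c : ι → R) :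
    ∀ n : ℕ, (∑ i, c i) ^ n = ∑ f : Fin n → ι, (List.ofFn fun j => c (f j)).prod := by
  intro n
  induction n with
  | zero => simp
  | succ n ih =>
    rw [pow_succ', ih, ← (Fin.consEquiv fun _ : Fin (n+1) => ι).sum_comp]
    rw [Fintype.sum_prod_type, Finset.sum_mul]
    refine Finset.sum_congr rfl fun i _ => ?_
    rw [Finset.mul_sum]
    refine Finset.sum_congr rfl fun f _ => ?_
    simp [List.ofFn_succ, Fin.consEquiv]

lemma prod_ite_zero {n : ℕ} (c : Fin n → R) (p : Fin n → Prop) [DecidablePred p] :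
    (List.ofFn fun j => if p j then c j else 0).prod
      = if ∀ j, p j then (List.ofFn fun j => c j).prod else 0 := by
  induction n with
  | zero => simp
  | succ n ih =>
    rw [List.ofFn_succ, List.prod_cons, List.ofFn_succ, List.prod_cons,
      ih (fun j => c j.succ) (fun j => p j.succ)]
    by_cases h0 : p 0
    · by_cases hs : ∀ j : Fin n, p j.succ
      · rw [if_pos h0, if_pos hs, if_pos]
        intro j
        rcases Fin.eq_zero_or_eq_succ j with rfl | ⟨k, rfl⟩
        exacts [h0, hs k]
      · rw [if_neg hs, mul_zero, if_neg]
        intro h; exact hs fun j => h _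
    · rw [if_neg h0, zero_mul, if_neg]
      intro h; exact h0 (h 0)

lemma sum_powerset_neg_one_pow_card' {α : Type*} [DecidableEq α] (x : Finset α) :
    (∑ s ∈ x.powerset, (-1 : R) ^ s.card) = if x = ∅ then 1 else 0 := by
  have := Finset.sum_powerset_neg_one_pow_card (x := x)
  have h2 := congrArg (Int.cast : ℤ → R) this
  push_cast at h2
  simpa using h2

lemma key {α : Type*} [Fintype α] [DecidableEq α] (S : Finset α) (P : R) :
    ∑ I : Finset α, (-1:R)^I.card * (if S ⊆ I then P else 0)
      = if S = univ then (-1:R)^(Fintype.card α) * P else 0 := by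
  simp_rw [mul_ite, mul_zero, Finset.sum_ite, Finset.sum_const_zero, add_zero]
  rw [Finset.sum_nbij' (i := fun I => I \ S) (j := fun J => S ∪ J)
    (t := Sᶜ.powerset) (g := fun J => (-1:R)^(S.card + J.card) * P)]
  · rw [← Finset.sum_mul]
    simp_rw [pow_add, ← Finset.mul_sum]
    rw [sum_powerset_neg_one_pow_card']
    by_cases h : S = univ
    · simp [h, Finset.card_univ]
    · have h2 : Sᶜ ≠ ∅ := by simpa [Finset.compl_eq_empty_iff] using h
      simp [h, h2]
  · intro I hI
    simp only [mem_filter, mem_univ, true_and] at hI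
    simp only [mem_powerset]
    intro x hx
    simp only [mem_sdiff] at hx
    simp [hx.2]
  · intro J hJ
    simp only [mem_powerset] at hJ
    simp
  · intro I hI
    simp only [mem_filter, mem_univ, true_and] at hI
    exact Finset.union_sdiff_of_subset hI
  · intro J hJ
    simp only [mem_powerset] at hJ
    refine Finset.union_sdiff_cancel_left ?_
    exact Finset.disjoint_left.2 fun x hx hx2 => by
      have := hJ hx2; simp only [Finset.mem_compl] at this; exact this hx
  · intro I hI
    simp only [mem_filter, mem_univ, true_and] at hI
    rw [← Finset.union_sdiff_of_subset hI, Finset.card_union_of_disjoint,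
      Finset.union_sdiff_cancel_left]
    · exact Finset.disjoint_left.2 fun x hx hx2 => (Finset.mem_sdiff.1 hx2).2 hx
    · exact Finset.disjoint_left.2 fun x hx hx2 => (Finset.mem_sdiff.1 hx2).2 hx

end Aux

/-- Polarization-type identity in a (possibly noncommutative) ring: the sum over all
permutations `σ` of the ordered products `a_{σ(1)}⋯a_{σ(m)}` equals
`(−1)^m · Σ_{I ⊆ [m]} (−1)^{|I|} (Σ_{i∈I} a_i)^m`. -/
theorem stmt_16 (R : Type*) [Ring R] (m : ℕ) (hm : 1 ≤ m) (a : Fin m → R) :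
    ∑ σ : Equiv.Perm (Fin m), (List.ofFn fun i => a (σ i)).prod =
      (-1 : R) ^ m * ∑ I : Finset (Fin m), (-1 : R) ^ I.card * (∑ i ∈ I, a i) ^ m := by
  classical
  symm
  have step1 : ∀ I : Finset (Fin m), (∑ i ∈ I, a i) ^ m
      = ∑ f : Fin m → Fin m, if Finset.image f Finset.univ ⊆ I
          then (List.ofFn fun j => a (f j)).prod else 0 := by
    intro I
    have h : (∑ i ∈ I, a i) = ∑ i : Fin m, if i ∈ I then a i else 0 := by
      simp [Finset.sum_ite_mem]
    rw [h, pow_sum_expand]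
    refine Finset.sum_congr rfl fun f _ => ?_
    rw [prod_ite_zero (fun j => a (f j)) (fun j => f j ∈ I)]
    exact if_congr (by simp [Finset.image_subset_iff]) rfl rfl
  calc (-1 : R) ^ m * ∑ I : Finset (Fin m), (-1 : R) ^ I.card * (∑ i ∈ I, a i) ^ m
      = (-1 : R) ^ m * ∑ f : Fin m → Fin m, ∑ I : Finset (Fin m),
          (-1 : R) ^ I.card * (if Finset.image f Finset.univ ⊆ I
            then (List.ofFn fun j => a (f j)).prod else 0) := by
        congr 1
        rw [Finset.sum_comm]
        refine Finset.sum_congr rfl fun I _ => ?_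
        rw [step1 I, Finset.mul_sum]
    _ = ∑ f : Fin m → Fin m, if Finset.image f Finset.univ = Finset.univ
          then (List.ofFn fun j => a (f j)).prod else 0 := by
        rw [Finset.mul_sum]
        refine Finset.sum_congr rfl fun f _ => ?_
        rw [key]
        rw [mul_ite, mul_zero, Fintype.card_fin, ← mul_assoc, ← pow_add,
          Even.neg_one_pow ⟨m, rfl⟩, one_mul]
    _ = ∑ σ : Equiv.Perm (Fin m), (List.ofFn fun i => a (σ i)).prod := by
        rw [← Finset.sum_filter]
        refine (Finset.sum_bij (fun (σ : Equiv.Perm (Fin m)) _ => ⇑σ) ?_ ?_ ?_ ?_).symm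
        · intro σ _
          simp only [Finset.mem_filter, Finset.mem_univ, true_and]
          ext x
          simp only [Finset.mem_image, Finset.mem_univ, true_and, iff_true]
          exact ⟨σ.symm x, σ.apply_symm_apply x⟩
        · intro σ _ τ _ h
          exact Equiv.coe_fn_injective h
        · intro f hf
          simp only [Finset.mem_filter, Finset.mem_univ, true_and] at hf
          have hsurj : Function.Surjective f := fun y => by
            have hy : y ∈ Finset.image f Finset.univ := by rw [hf]; exact Finset.mem_univ y
            obtain ⟨x, _, hx⟩ := Finset.mem_image.1 hy
            exact ⟨x, hx⟩
          have hb : Function.Bijective f := Finite.surjective_iff_bijective.1 hsurj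
          exact ⟨Equiv.ofBijective f hb, Finset.mem_univ _, rfl⟩
        · intro σ _
          rfl
end
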